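/- arXiv:1409.3644 — 11 statements merged into one kernel-verified Lean document; each statement's English description precedes it below -/
import Mathlib

section
/- If x_1,...,x_m and y_1,...,y_m are pairwise distinct reals with x_i ≠ y_j for all i,j, then the Cauchy matrix A = [1/(x_i - y_j)] is invertible, and its inverse B = [b_{ij}] is given by b_{ij} = (x_j - y_i) · A_j(y_i) · B_i(x_j), where A_i(x) = ∏_{ℓ≠i} (x - x_ℓ)/(x_i - x_ℓ) and B_j(y) = ∏_{ℓ≠j} (y - y_ℓ)/(y_j - y_ℓ) are the Lagrange basis polynomials for the nodes (x_i) and (y_j) respectively. -/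
/-!
Write `w_k = ∏_{ℓ ≠ k} (x_k - x_ℓ)⁻¹`, so that `A_k(t) = w_k ∏_{ℓ ≠ k} (t - x_ℓ)`. Since
`(t - x_k) ∏_{ℓ ≠ k} (t - x_ℓ) = ∏_ℓ (t - x_ℓ) = (t - x_i) ∏_{ℓ ≠ i} (t - x_ℓ)`, the `(i, k)` entry
of the product of `A` with the claimed inverse is `w_k ∑_j P_i(y_j) B_j(x_k)`, where
`P_i = ∏_{ℓ ≠ i} (X - x_ℓ)` has degree `m - 1`. Lagrange interpolation at the nodes `y` turns this
into `w_k P_i(x_k)`, which is `1` for `i = k` and `0` otherwise.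
-/

open Polynomial Finset

namespace Lagrange

variable {F ι : Type*} [Field F] [DecidableEq ι] {s : Finset ι} {v : ι → F}

theorem eval_basis (i : ι) (t : F) :
    (Lagrange.basis s v i).eval t = ∏ j ∈ s.erase i, (t - v j) / (v i - v j) := by
  simp only [Lagrange.basis, eval_prod, basisDivisor, eval_mul, eval_C, eval_sub, eval_X,
    div_eq_mul_inv, mul_comm]

theorem sum_eval_mul_eval_basis (hvs : Set.InjOn v s) {p : F[X]} (hp : p.degree < #s) (t : F) :
    ∑ i ∈ s, p.eval (v i) * (Lagrange.basis s v i).eval t = p.eval t := by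
  conv_rhs => rw [eq_interpolate hvs hp]
  simp only [interpolate_apply, eval_finsetSum, eval_mul, eval_C]

theorem degree_nodal_erase_lt {i : ι} (hi : i ∈ s) : (nodal (s.erase i) v).degree < #s := by
  rw [degree_nodal, card_erase_of_mem hi]
  exact_mod_cast Nat.sub_lt (card_pos.mpr ⟨i, hi⟩) one_pos

theorem nodalWeight_mul_eval_nodal_erase (hvs : Set.InjOn v s) {i k : ι} (hi : i ∈ s)
    (hk : k ∈ s) :
    nodalWeight s v k * (nodal (s.erase i) v).eval (v k) = if i = k then 1 else 0 := by
  split_ifs with hik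
  · subst hik
    rw [nodalWeight_eq_eval_nodal_erase_inv, inv_mul_cancel₀]
    refine eval_nodal_not_at_node fun j hj hij => ?_
    obtain ⟨hji, hj⟩ := mem_erase.mp hj
    exact hji (hvs hj hi hij.symm)
  · rw [eval_nodal_at_node (mem_erase.mpr ⟨Ne.symm hik, hk⟩), mul_zero]

theorem one_div_sub_mul_sub_mul_eval_basis {i k : ι} (hi : i ∈ s) (hk : k ∈ s) {t : F}
    (ht : v i ≠ t) :
    1 / (v i - t) * ((v k - t) * (Lagrange.basis s v k).eval t) =
      nodalWeight s v k * (nodal (s.erase i) v).eval t := by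
  have hnodal : ∀ j ∈ s, (t - v j) * (nodal (s.erase j) v).eval t = (nodal s v).eval t :=
    fun j hj => by rw [eval_nodal, eval_nodal]; exact mul_prod_erase s (fun l => t - v l) hj
  rw [basis_eq_prod_sub_inv_mul_nodal_div hk, ← nodal_erase_eq_nodal_div hk, eval_mul, eval_C]
  have hvt : v i - t ≠ 0 := sub_ne_zero.mpr ht
  field_simp
  linear_combination (nodalWeight s v k) * (hnodal i hi - hnodal k hk)

end Lagrange

open Lagrange

theorem cauchy_mul_lagrange_eq_one {F ι : Type*} [Field F] [Fintype ι] [DecidableEq ι]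
    {x y : ι → F} (hx : Function.Injective x) (hy : Function.Injective y)
    (h : ∀ i j, x i ≠ y j) :
    (Matrix.of fun i j => 1 / (x i - y j)) *
        (Matrix.of fun i j => (x j - y i) * (Lagrange.basis univ x j).eval (y i) *
          (Lagrange.basis univ y i).eval (x j)) = 1 := by
  ext i k
  rw [Matrix.mul_apply, Matrix.one_apply]
  calc ∑ j, 1 / (x i - y j) * ((x k - y j) * (Lagrange.basis univ x k).eval (y j) *
          (Lagrange.basis univ y j).eval (x k))
      = ∑ j, nodalWeight univ x k *
          ((nodal (univ.erase i) x).eval (y j) * (Lagrange.basis univ y j).eval (x k)) := by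
        refine sum_congr rfl fun j _ => ?_
        rw [← mul_assoc, one_div_sub_mul_sub_mul_eval_basis (mem_univ i) (mem_univ k) (h i j),
          mul_assoc]
    _ = nodalWeight univ x k * (nodal (univ.erase i) x).eval (x k) := by
        rw [← mul_sum, sum_eval_mul_eval_basis hy.injOn (degree_nodal_erase_lt (mem_univ i))]
    _ = if i = k then 1 else 0 :=
        nodalWeight_mul_eval_nodal_erase hx.injOn (mem_univ i) (mem_univ k)

/-- The Cauchy matrix `[1/(x i - y j)]` with pairwise distinct nodes is invertible,
and its inverse has entries `b i j = (x j - y i) · A_j(y i) · B_i(x j)`, where `A_j` and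
`B_i` are the Lagrange basis polynomials at the nodes `x` and `y` respectively. -/
theorem cauchy_matrix_inverse (m : ℕ) (x y : Fin m → ℝ)
    (hx : Function.Injective x) (hy : Function.Injective y)
    (h : ∀ i j, x i ≠ y j) :
    IsUnit (Matrix.of fun i j : Fin m => 1 / (x i - y j)) ∧
      ∀ i j : Fin m,
        (Matrix.of fun i j : Fin m => 1 / (x i - y j))⁻¹ i j =
          (x j - y i) *
            (∏ ℓ ∈ Finset.univ.erase j, (y i - x ℓ) / (x j - x ℓ)) *
            (∏ ℓ ∈ Finset.univ.erase i, (x j - y ℓ) / (y i - y ℓ)) := by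
  have hAB := cauchy_mul_lagrange_eq_one hx hy h
  simp only [eval_basis] at hAB
  refine ⟨(Matrix.isUnit_iff_isUnit_det _).mpr (Matrix.isUnit_det_of_right_inverse hAB),
    fun i j => ?_⟩
  rw [Matrix.inv_eq_right_inv hAB, Matrix.of_apply]
end

section
/- Let d be a positive odd integer, k = ⌊d/4⌋, and define c_j = (∏_{1≤ℓ≤k} (d - 2j - 2ℓ)) / (∏_{1≤ℓ≤k, ℓ≠j} (2ℓ - 2j)) for 1 ≤ j ≤ k. Then for every integer m with 1 ≤ m ≤ k, one has ∑_{j=1}^{k} c_j / (d - 2m - 2j) = 1. -/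
open Polynomial Lagrange Finset

/-! The sum is the divided difference `f[x₁, …, x_k]` at the nodes `x_j = -2j` of the monic
polynomial `f(x) = ∏_{ℓ ≠ m} (x + d - 2ℓ)` of degree `k - 1`, hence equals its leading
coefficient `1`: the factor `d - 2m - 2j` of `c_j` cancels against the denominator. -/

theorem Lagrange.sum_eval_div_prod_sub_eq_one_of_monic {F ι : Type*} [Field F] [DecidableEq ι]
    {s : Finset ι} {v : ι → F} (hvs : Set.InjOn v s) (hs : s.Nonempty)
    {P : F[X]} (hP : P.Monic) (hPdeg : P.natDegree = #s - 1) :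
    ∑ i ∈ s, P.eval (v i) / ∏ j ∈ s.erase i, (v i - v j) = 1 := by
  have hlt : P.degree < #s := by
    rw [degree_eq_natDegree hP.ne_zero, hPdeg]
    exact_mod_cast Nat.sub_lt hs.card_pos one_pos
  rw [← coeff_eq_sum hvs hlt, ← hPdeg, ← leadingCoeff, hP.leadingCoeff]

theorem ci_identity_one_general (d : ℕ) (hd : Odd d)
    (c : ℕ → ℝ)
    (hc : ∀ j, c j =
      (∏ ℓ ∈ Finset.Icc 1 (d / 4), ((d : ℝ) - 2 * (j : ℝ) - 2 * (ℓ : ℝ))) /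
        ∏ ℓ ∈ (Finset.Icc 1 (d / 4)).erase j, (2 * (ℓ : ℝ) - 2 * (j : ℝ)))
    (m : ℕ) (hm1 : 1 ≤ m) (hm2 : m ≤ d / 4) :
    ∑ j ∈ Finset.Icc 1 (d / 4), c j / ((d : ℝ) - 2 * (m : ℝ) - 2 * (j : ℝ)) = 1 := by
  set s := Finset.Icc 1 (d / 4)
  have hm : m ∈ s := mem_Icc.mpr ⟨hm1, hm2⟩
  have hne : ∀ a b : ℕ, (d : ℝ) - 2 * a - 2 * b ≠ 0 := fun a b h => by
    have : d = 2 * (a + b) := by exact_mod_cast (by linarith : (d : ℝ) = 2 * (a + b))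
    exact Nat.not_even_iff_odd.mpr hd ⟨a + b, by omega⟩
  have hvs : Set.InjOn (fun j : ℕ => -2 * (j : ℝ)) s := fun a _ b _ h => by simpa using h
  calc ∑ j ∈ s, c j / ((d : ℝ) - 2 * m - 2 * j)
      = ∑ j ∈ s, (nodal (s.erase m) fun ℓ : ℕ => 2 * (ℓ : ℝ) - d).eval (-2 * (j : ℝ)) /
          ∏ ℓ ∈ s.erase j, (-2 * (j : ℝ) - -2 * ℓ) := by
        refine sum_congr rfl fun j _ => ?_
        rw [hc j, ← mul_prod_erase s _ hm, eval_nodal,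
          show (d : ℝ) - 2 * m - 2 * j = d - 2 * j - 2 * m by ring, mul_div_assoc,
          mul_div_cancel_left₀ _ (hne j m)]
        congr 1 <;> exact prod_congr rfl fun ℓ _ => by ring
    _ = 1 := sum_eval_div_prod_sub_eq_one_of_monic hvs ⟨m, hm⟩ nodal_monic
        (by rw [natDegree_nodal, card_erase_of_mem hm])

/-- For `d` a positive odd integer, `k = ⌊d/4⌋`, and the coefficients
`c j = (∏_{1≤ℓ≤k} (d - 2j - 2ℓ)) / (∏_{1≤ℓ≤k, ℓ≠j} (2ℓ - 2j))`, one has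
`∑_{j=1}^{k} c j / (d - 2m - 2j) = 1` for every `1 ≤ m ≤ k`. -/
theorem ci_identity_one (d : ℕ) (hd : Odd d) (hd0 : 0 < d)
    (c : ℕ → ℝ)
    (hc : ∀ j, c j =
      (∏ ℓ ∈ Finset.Icc 1 (d / 4), ((d : ℝ) - 2 * (j : ℝ) - 2 * (ℓ : ℝ))) /
        ∏ ℓ ∈ (Finset.Icc 1 (d / 4)).erase j, (2 * (ℓ : ℝ) - 2 * (j : ℝ)))
    (m : ℕ) (hm1 : 1 ≤ m) (hm2 : m ≤ d / 4) :
    ∑ j ∈ Finset.Icc 1 (d / 4), c j / ((d : ℝ) - 2 * (m : ℝ) - 2 * (j : ℝ)) = 1 :=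
  ci_identity_one_general d hd c hc m hm1 hm2
end

section
/- Let d be a positive odd integer, k = ⌊d/4⌋, and c_j = (∏_{1≤ℓ≤k} (d - 2j - 2ℓ)) / (∏_{1≤ℓ≤k, ℓ≠j} (2ℓ - 2j)). Then ∑_{j=1}^{k} c_j/(2j) + 1 = ∏_{ℓ=1}^{k} (d - 2ℓ)/(2ℓ). -/
/-!
The monic polynomial `∏ ℓ (X - w ℓ)` of degree `k` has `X ^ k`-coefficient `1`; by Lagrange
interpolation at `k + 1` distinct nodes `v i` this coefficient is also
`∑ i, ∏ ℓ (v i - w ℓ) / ∏ j ≠ i, (v i - v j)`. With nodes `-2i` (`0 ≤ i ≤ k`) and roots `2ℓ - d`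
the term at `0` is `∏ ℓ (d - 2ℓ) / (2ℓ)` and the term at `-2j` is `-c j / (2j)`.
-/

open Finset

theorem Lagrange.sum_prod_sub_div_prod_sub_eq_one {F ι κ : Type*} [Field F] [DecidableEq ι]
    {s : Finset ι} {v : ι → F} (hvs : Set.InjOn v s) (t : Finset κ) (w : κ → F)
    (hst : #s = #t + 1) :
    ∑ i ∈ s, (∏ ℓ ∈ t, (v i - w ℓ)) / ∏ j ∈ s.erase i, (v i - v j) = 1 := by
  have hdeg : (#s : WithBot ℕ) = (Lagrange.nodal t w).degree + 1 := by
    rw [Lagrange.degree_nodal, hst]; rfl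
  simpa [(Lagrange.nodal_monic).leadingCoeff, Lagrange.eval_nodal] using
    (Lagrange.leadingCoeff_eq_sum hvs hdeg).symm

theorem sum_prod_div_prod_div_add_one_eq_prod {F : Type*} [Field F] [CharZero F] (x : F) (k : ℕ) :
    ∑ j ∈ Icc 1 k, (∏ ℓ ∈ Icc 1 k, (x - 2 * j - 2 * ℓ)) /
        (∏ ℓ ∈ (Icc 1 k).erase j, (2 * ℓ - 2 * j : F)) / (2 * j) + 1 =
      ∏ ℓ ∈ Icc 1 k, (x - 2 * ℓ) / (2 * ℓ) := by
  have hvs : Set.InjOn (fun i : ℕ => -2 * (i : F)) (Icc 0 k) := fun a _ b _ h => by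
    simpa using h
  have key := Lagrange.sum_prod_sub_div_prod_sub_eq_one hvs (Icc 1 k) (fun ℓ => 2 * ℓ - x)
    (by simp)
  have h0 : (0 : ℕ) ∉ Icc 1 k := by simp
  rw [← insert_Icc_add_one_left_eq_Icc (Nat.zero_le k), zero_add, sum_insert h0,
    erase_insert h0] at key
  have hterm : ∀ j ∈ Icc 1 k,
      (∏ ℓ ∈ Icc 1 k, (-2 * (j : F) - (2 * ℓ - x))) /
        ∏ m ∈ (insert 0 (Icc 1 k)).erase j, (-2 * (j : F) - -2 * m) =
      -((∏ ℓ ∈ Icc 1 k, (x - 2 * j - 2 * ℓ)) /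
        (∏ ℓ ∈ (Icc 1 k).erase j, (2 * ℓ - 2 * j : F)) / (2 * j)) := by
    intro j hj
    have hj0 : j ≠ 0 := Nat.one_le_iff_ne_zero.mp (mem_Icc.mp hj).1
    rw [erase_insert_of_ne hj0.symm, prod_insert (by simp)]
    have hnum : ∏ ℓ ∈ Icc 1 k, (-2 * (j : F) - (2 * ℓ - x)) = ∏ ℓ ∈ Icc 1 k, (x - 2 * j - 2 * ℓ) :=
      prod_congr rfl fun _ _ => by ring
    have hden : ∏ m ∈ (Icc 1 k).erase j, (-2 * (j : F) - -2 * m) =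
        ∏ m ∈ (Icc 1 k).erase j, (2 * m - 2 * j : F) :=
      prod_congr rfl fun _ _ => by ring
    rw [hnum, hden]
    push_cast
    ring
  have hzero : (∏ ℓ ∈ Icc 1 k, (-2 * ((0 : ℕ) : F) - (2 * ℓ - x))) /
      ∏ m ∈ Icc 1 k, (-2 * ((0 : ℕ) : F) - -2 * m) = ∏ ℓ ∈ Icc 1 k, (x - 2 * ℓ) / (2 * ℓ) := by
    rw [← prod_div_distrib]
    refine prod_congr rfl fun ℓ _ => ?_
    push_cast
    ring
  rw [sum_congr rfl hterm, sum_neg_distrib, hzero] at key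
  linear_combination -key

theorem ci_identity_two_general (d : ℕ)
    (c : ℕ → ℝ)
    (hc : ∀ j, c j =
      (∏ ℓ ∈ Finset.Icc 1 (d / 4), ((d : ℝ) - 2 * (j : ℝ) - 2 * (ℓ : ℝ))) /
        ∏ ℓ ∈ (Finset.Icc 1 (d / 4)).erase j, (2 * (ℓ : ℝ) - 2 * (j : ℝ))) :
    ∑ j ∈ Finset.Icc 1 (d / 4), c j / (2 * (j : ℝ)) + 1 =
      ∏ ℓ ∈ Finset.Icc 1 (d / 4), ((d : ℝ) - 2 * (ℓ : ℝ)) / (2 * (ℓ : ℝ)) := by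
  simpa only [hc] using sum_prod_div_prod_div_add_one_eq_prod (d : ℝ) (d / 4)

/-- For `d` a positive odd integer, `k = ⌊d/4⌋`, and the coefficients
`c j = (∏_{1≤ℓ≤k} (d - 2j - 2ℓ)) / (∏_{1≤ℓ≤k, ℓ≠j} (2ℓ - 2j))`, one has
`∑_{j=1}^{k} c j / (2j) + 1 = ∏_{ℓ=1}^{k} (d - 2ℓ)/(2ℓ)`. -/
theorem ci_identity_two (d : ℕ) (hd : Odd d) (hd0 : 0 < d)
    (c : ℕ → ℝ)
    (hc : ∀ j, c j =
      (∏ ℓ ∈ Finset.Icc 1 (d / 4), ((d : ℝ) - 2 * (j : ℝ) - 2 * (ℓ : ℝ))) /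
        ∏ ℓ ∈ (Finset.Icc 1 (d / 4)).erase j, (2 * (ℓ : ℝ) - 2 * (j : ℝ))) :
    ∑ j ∈ Finset.Icc 1 (d / 4), c j / (2 * (j : ℝ)) + 1 =
      ∏ ℓ ∈ Finset.Icc 1 (d / 4), ((d : ℝ) - 2 * (ℓ : ℝ)) / (2 * (ℓ : ℝ)) :=
  ci_identity_two_general d c hc
end

section
/- Let d be a positive odd integer, k̃ = ⌊(d+2)/4⌋, and define d_j = (∏_{1≤ℓ≤k̃} (d + 2 - 2ℓ - 2j)) / (∏_{1≤ℓ≤k̃, ℓ≠j} (2ℓ - 2j)) for 1 ≤ j ≤ k̃. Then for every integer m with 1 ≤ m ≤ k̃, one has ∑_{j=1}^{k̃} d_j / (d + 2 - 2m - 2j) = 1. -/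
/-!
With the nodes `x_j = -2j`, the summand `D j / (d + 2 - 2m - 2j)` is `P(x_j) / ∏_{ℓ ≠ j} (x_j - x_ℓ)`
for the monic polynomial `P(x) = ∏_{ℓ ≠ m} (x + d + 2 - 2ℓ)` of degree `k̃ - 1`. By Lagrange
interpolation on the `k̃` nodes, this sum is the leading coefficient of `P`, namely `1`.
-/

open Finset Polynomial

theorem Lagrange.sum_prod_add_div_prod_sub_eq_one {F ι : Type*} [Field F] [DecidableEq ι]
    {s t : Finset ι} {v : ι → F} (hvs : Set.InjOn v s) (ht : #t + 1 = #s) (a : ι → F) :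
    ∑ j ∈ s, (∏ ℓ ∈ t, (v j + a ℓ)) / ∏ ℓ ∈ s.erase j, (v j - v ℓ) = 1 := by
  set P : F[X] := ∏ ℓ ∈ t, (X + C (a ℓ))
  have hP : P.Monic := monic_prod_of_monic _ _ fun ℓ _ => monic_X_add_C _
  have hdeg : #s = P.degree + 1 := by
    rw [degree_prod, sum_congr rfl fun ℓ _ => degree_X_add_C (a ℓ), sum_const, nsmul_one, ← ht]
    norm_cast
  simpa [P, eval_prod, hP.leadingCoeff] using (leadingCoeff_eq_sum hvs hdeg).symm

theorem Odd.natCast_add_two_sub_ne_zero {d : ℕ} (hd : Odd d) (m j : ℕ) :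
    (d : ℝ) + 2 - 2 * m - 2 * j ≠ 0 := by
  obtain ⟨t, rfl⟩ := hd
  have hcast : ((2 * t + 1 : ℕ) : ℝ) + 2 - 2 * m - 2 * j =
      ((2 * t + 3 - 2 * m - 2 * j : ℤ) : ℝ) := by
    push_cast; ring
  rw [hcast]
  exact_mod_cast (by omega : (2 * t + 3 - 2 * m - 2 * j : ℤ) ≠ 0)

theorem di_identity_one_general (d : ℕ) (hd : Odd d)
    (D : ℕ → ℝ)
    (hD : ∀ j, D j =
      (∏ ℓ ∈ Finset.Icc 1 ((d + 2) / 4), ((d : ℝ) + 2 - 2 * (ℓ : ℝ) - 2 * (j : ℝ))) /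
        ∏ ℓ ∈ (Finset.Icc 1 ((d + 2) / 4)).erase j, (2 * (ℓ : ℝ) - 2 * (j : ℝ)))
    (m : ℕ) (hm1 : 1 ≤ m) (hm2 : m ≤ (d + 2) / 4) :
    ∑ j ∈ Finset.Icc 1 ((d + 2) / 4),
        D j / ((d : ℝ) + 2 - 2 * (m : ℝ) - 2 * (j : ℝ)) = 1 := by
  set s := Icc 1 ((d + 2) / 4)
  have hm : m ∈ s := mem_Icc.mpr ⟨hm1, hm2⟩
  have hvs : Set.InjOn (fun j : ℕ => -(2 * (j : ℝ))) s := fun a _ b _ hab => by simpa using hab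
  rw [← Lagrange.sum_prod_add_div_prod_sub_eq_one hvs (card_erase_add_one hm)
    (fun ℓ => (d : ℝ) + 2 - 2 * ℓ)]
  refine sum_congr rfl fun j _ => ?_
  rw [hD, ← prod_erase_mul s _ hm, div_right_comm,
    mul_div_cancel_right₀ _ (hd.natCast_add_two_sub_ne_zero m j)]
  congr 1 <;> exact prod_congr rfl fun ℓ _ => by ring

/-- For `d` a positive odd integer, `k̃ = ⌊(d+2)/4⌋`, and the coefficients
`D j = (∏_{1≤ℓ≤k̃} (d + 2 - 2ℓ - 2j)) / (∏_{1≤ℓ≤k̃, ℓ≠j} (2ℓ - 2j))`, one has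
`∑_{j=1}^{k̃} D j / (d + 2 - 2m - 2j) = 1` for every `1 ≤ m ≤ k̃`. -/
theorem di_identity_one (d : ℕ) (hd : Odd d) (hd0 : 0 < d)
    (D : ℕ → ℝ)
    (hD : ∀ j, D j =
      (∏ ℓ ∈ Finset.Icc 1 ((d + 2) / 4), ((d : ℝ) + 2 - 2 * (ℓ : ℝ) - 2 * (j : ℝ))) /
        ∏ ℓ ∈ (Finset.Icc 1 ((d + 2) / 4)).erase j, (2 * (ℓ : ℝ) - 2 * (j : ℝ)))
    (m : ℕ) (hm1 : 1 ≤ m) (hm2 : m ≤ (d + 2) / 4) :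
    ∑ j ∈ Finset.Icc 1 ((d + 2) / 4),
        D j / ((d : ℝ) + 2 - 2 * (m : ℝ) - 2 * (j : ℝ)) = 1 :=
  di_identity_one_general d hd D hD m hm1 hm2
end

section
/- Let d be a positive odd integer, k̃ = ⌊(d+2)/4⌋, and d_j = (∏_{1≤ℓ≤k̃} (d + 2 - 2ℓ - 2j)) / (∏_{1≤ℓ≤k̃, ℓ≠j} (2ℓ - 2j)). Then ∑_{j=1}^{k̃} d_j/(2j) + 1 = ∏_{ℓ=1}^{k̃} (d + 2 - 2ℓ)/(2ℓ). -/
/-!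
The top divided difference of a monic polynomial of degree `k` on `k + 1` nodes is `1`.
Apply this to `P(t) = ∏_{ℓ=1}^{k} (t + x - 2ℓ)` on the nodes `0, -2, …, -2k`: the node `0`
contributes `∏_ℓ (x - 2ℓ)/(2ℓ)`, and the node `-2j` contributes `-D j/(2j)`, because its
denominator is `(-2j) · ∏_{ℓ ≠ j} (2ℓ - 2j)`. The theorem is the case `x = d + 2`.
-/

open Finset Polynomial

theorem Polynomial.Monic.sum_eval_div_prod_sub_eq_one {F ι : Type*} [Field F] [DecidableEq ι]
    {s : Finset ι} {v : ι → F} (hvs : Set.InjOn v s) {P : F[X]} (hP : P.Monic)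
    (hdeg : P.natDegree + 1 = #s) :
    ∑ i ∈ s, P.eval (v i) / ∏ j ∈ s.erase i, (v i - v j) = 1 := by
  rw [← Lagrange.coeff_eq_sum hvs, ← hdeg, Nat.add_sub_cancel, hP.coeff_natDegree]
  rw [← hdeg, degree_eq_natDegree hP.ne_zero]
  exact_mod_cast P.natDegree.lt_succ_self

theorem sum_prod_sub_div_add_one_eq_prod_div {F : Type*} [Field F] [CharZero F] (k : ℕ) (x : F) :
    ∑ j ∈ Icc 1 k, (∏ ℓ ∈ Icc 1 k, (x - 2 * (ℓ : F) - 2 * (j : F))) /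
        (∏ ℓ ∈ (Icc 1 k).erase j, (2 * (ℓ : F) - 2 * (j : F))) / (2 * (j : F)) + 1 =
      ∏ ℓ ∈ Icc 1 k, (x - 2 * (ℓ : F)) / (2 * (ℓ : F)) := by
  set P : F[X] := ∏ ℓ ∈ Icc 1 k, (X + C (x - 2 * ℓ))
  have hP_monic : P.Monic := monic_prod_of_monic _ _ fun ℓ _ => monic_X_add_C _
  have hP_deg : P.natDegree = k := by
    rw [natDegree_prod_of_monic _ _ fun ℓ _ => monic_X_add_C _]
    simp only [natDegree_X_add_C, sum_const, Nat.card_Icc, smul_eq_mul, mul_one,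
      Nat.add_sub_cancel]
  have h0 : (0 : ℕ) ∉ Icc 1 k := by simp
  have hv : Set.InjOn (fun i : ℕ => -2 * (i : F)) ↑(insert 0 (Icc 1 k)) := by
    intro i _ j _ h
    simpa using h
  have hdivdiff := hP_monic.sum_eval_div_prod_sub_eq_one hv
    (by rw [card_insert_of_notMem h0, hP_deg, Nat.card_Icc, Nat.add_sub_cancel])
  have hnode : ∀ j ∈ Icc 1 k,
      P.eval (-2 * (j : F)) / ∏ i ∈ (insert 0 (Icc 1 k)).erase j, (-2 * (j : F) - -2 * (i : F)) =
        -((∏ ℓ ∈ Icc 1 k, (x - 2 * (ℓ : F) - 2 * (j : F))) /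
          (∏ ℓ ∈ (Icc 1 k).erase j, (2 * (ℓ : F) - 2 * (j : F))) / (2 * (j : F))) := by
    intro j hj
    have hj0 : (0 : ℕ) ≠ j := by simp only [mem_Icc] at hj; omega
    have hnum : ∏ ℓ ∈ Icc 1 k, (X + C (x - 2 * (ℓ : F))).eval (-2 * (j : F)) =
        ∏ ℓ ∈ Icc 1 k, (x - 2 * (ℓ : F) - 2 * (j : F)) :=
      prod_congr rfl fun ℓ _ => by simp only [eval_add, eval_X, eval_C]; ring
    have hden : ∏ ℓ ∈ (Icc 1 k).erase j, (-2 * (j : F) - -2 * (ℓ : F)) =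
        ∏ ℓ ∈ (Icc 1 k).erase j, (2 * (ℓ : F) - 2 * (j : F)) :=
      prod_congr rfl fun ℓ _ => by ring
    rw [erase_insert_of_ne hj0, prod_insert (by simp), eval_prod, hnum, hden, Nat.cast_zero,
      mul_zero, sub_zero, neg_mul, neg_mul, div_neg, div_div, mul_comm (2 * (j : F))]
  rw [sum_insert h0, erase_insert h0, sum_congr rfl hnode, sum_neg_distrib, eval_prod]
    at hdivdiff
  simp only [eval_add, eval_X, eval_C, Nat.cast_zero, mul_zero, zero_add, zero_sub, neg_mul,
    neg_neg] at hdivdiff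
  rw [prod_div_distrib]
  linear_combination -hdivdiff

theorem di_identity_two_general (d : ℕ)
    (D : ℕ → ℝ)
    (hD : ∀ j, D j =
      (∏ ℓ ∈ Finset.Icc 1 ((d + 2) / 4), ((d : ℝ) + 2 - 2 * (ℓ : ℝ) - 2 * (j : ℝ))) /
        ∏ ℓ ∈ (Finset.Icc 1 ((d + 2) / 4)).erase j, (2 * (ℓ : ℝ) - 2 * (j : ℝ))) :
    ∑ j ∈ Finset.Icc 1 ((d + 2) / 4), D j / (2 * (j : ℝ)) + 1 =
      ∏ ℓ ∈ Finset.Icc 1 ((d + 2) / 4), ((d : ℝ) + 2 - 2 * (ℓ : ℝ)) / (2 * (ℓ : ℝ)) := by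
  simp only [hD]
  exact sum_prod_sub_div_add_one_eq_prod_div ((d + 2) / 4) ((d : ℝ) + 2)

/-- For `d` a positive odd integer, `k̃ = ⌊(d+2)/4⌋`, and the coefficients
`D j = (∏_{1≤ℓ≤k̃} (d + 2 - 2ℓ - 2j)) / (∏_{1≤ℓ≤k̃, ℓ≠j} (2ℓ - 2j))`, one has
`∑_{j=1}^{k̃} D j / (2j) + 1 = ∏_{ℓ=1}^{k̃} (d + 2 - 2ℓ)/(2ℓ)`. -/
theorem di_identity_two (d : ℕ) (hd : Odd d) (hd0 : 0 < d)
    (D : ℕ → ℝ)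
    (hD : ∀ j, D j =
      (∏ ℓ ∈ Finset.Icc 1 ((d + 2) / 4), ((d : ℝ) + 2 - 2 * (ℓ : ℝ) - 2 * (j : ℝ))) /
        ∏ ℓ ∈ (Finset.Icc 1 ((d + 2) / 4)).erase j, (2 * (ℓ : ℝ) - 2 * (j : ℝ))) :
    ∑ j ∈ Finset.Icc 1 ((d + 2) / 4), D j / (2 * (j : ℝ)) + 1 =
      ∏ ℓ ∈ Finset.Icc 1 ((d + 2) / 4), ((d : ℝ) + 2 - 2 * (ℓ : ℝ)) / (2 * (ℓ : ℝ)) :=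
  di_identity_two_general d D hD
end

section
/- Let d be a positive odd integer, k = ⌊d/4⌋, and c_j = (∏_{1≤ℓ≤k} (d - 2j - 2ℓ)) / (∏_{1≤ℓ≤k, ℓ≠j} (2ℓ - 2j)) for 1 ≤ j ≤ k. Then for every j with 1 ≤ j ≤ k one has ∑_{i=1}^{k} c_i / (d - 2i - 2j)^2 = 1/c_j. In particular, the quantity ∑_{i=1}^{k} (c_i c_j)/((d - 2i - 2j)^2) · 2j(d - 2j - 2) equals 2j(d - 2j - 2) and is nonzero. -/
/-!
Work with arbitrary distinct nodes `x i` and a shift `σ` (here `x ℓ = 2ℓ`, `σ = d`). With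
`A i = ∏ ℓ, (σ - x i - x ℓ)` and the Lagrange weights `w i = ∏_{ℓ ≠ i} (x i - x ℓ)⁻¹`, one has
`c i = ± A i * w i` with a sign independent of `i`. The polynomial `T = ∏_{ℓ ≠ j} (σ - x ℓ - X)`
has degree `< #s`, so it equals its Lagrange interpolant at the nodes `x i`; evaluating the
barycentric form at `σ - x j`, which is not a node, gives
`w j⁻¹ = A j * ∑ i, w i * A i / (σ - x i - x j)²`, i.e. `∑ i, c i * c j / (σ - x i - x j)² = 1`.
In particular `c j ≠ 0`, and all the denominators `d - 2i - 2j` are odd, hence nonzero.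
-/

open Finset Polynomial Lagrange

theorem Polynomial.degree_prod_C_sub_X {R ι : Type*} [CommRing R] [IsDomain R]
    (s : Finset ι) (a : ι → R) : (∏ i ∈ s, (C (a i) - X)).degree = (#s : WithBot ℕ) := by
  have hdeg (r : R) : (C r - X).degree = 1 := by rw [← neg_sub, degree_neg, degree_X_sub_C]
  simp [degree_prod, hdeg]

theorem Odd.natCast_sub_two_mul_sub_two_mul_ne_zero {R : Type*} [Ring R] [CharZero R] {d : ℕ}
    (hd : Odd d) (a b : ℕ) : (d : R) - 2 * a - 2 * b ≠ 0 := by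
  rw [sub_sub, ← mul_add, sub_ne_zero]
  obtain ⟨m, rfl⟩ := hd
  exact_mod_cast (by omega : 2 * m + 1 ≠ 2 * (a + b))

section Cauchy

variable {K ι : Type*} [Field K] [DecidableEq ι] (s : Finset ι) (x : ι → K) (σ : K)

def cauchyCoeff (j : ι) : K :=
  (∏ ℓ ∈ s, (σ - x j - x ℓ)) / ∏ ℓ ∈ s.erase j, (x ℓ - x j)

variable {s x σ}

theorem cauchyCoeff_eq_mul_nodalWeight {i : ι} (hi : i ∈ s) :
    cauchyCoeff s x σ i = (-1) ^ (#s - 1) * (∏ ℓ ∈ s, (σ - x i - x ℓ)) * nodalWeight s x i := by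
  have hsign : ∏ ℓ ∈ s.erase i, (x ℓ - x i) = (-1) ^ (#s - 1) * ∏ ℓ ∈ s.erase i, (x i - x ℓ) := by
    rw [← card_erase_of_mem hi, ← prod_neg]
    simp only [neg_sub]
  rw [cauchyCoeff, nodalWeight, prod_inv_distrib, hsign, div_eq_mul_inv, mul_inv, ← inv_pow,
    inv_neg_one]
  ring

theorem cauchyCoeff_mul_cauchyCoeff {i j : ι} (hi : i ∈ s) (hj : j ∈ s) :
    cauchyCoeff s x σ i * cauchyCoeff s x σ j =
      (∏ ℓ ∈ s, (σ - x i - x ℓ)) * (∏ ℓ ∈ s, (σ - x j - x ℓ)) *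
        (nodalWeight s x i * nodalWeight s x j) := by
  have hsq : ((-1 : K) ^ (#s - 1)) ^ 2 = 1 := by rw [← pow_mul, pow_mul', neg_one_sq, one_pow]
  rw [cauchyCoeff_eq_mul_nodalWeight hi, cauchyCoeff_eq_mul_nodalWeight hj]
  linear_combination (∏ ℓ ∈ s, (σ - x i - x ℓ)) * (∏ ℓ ∈ s, (σ - x j - x ℓ)) *
    (nodalWeight s x i * nodalWeight s x j) * hsq

theorem inv_nodalWeight_eq_mul_sum (hx : Set.InjOn x s) {j : ι} (hj : j ∈ s)
    (hD : ∀ i ∈ s, σ - x i - x j ≠ 0) :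
    (nodalWeight s x j)⁻¹ = (∏ ℓ ∈ s, (σ - x j - x ℓ)) *
      ∑ i ∈ s, nodalWeight s x i * (σ - x i - x j)⁻¹ * ∏ ℓ ∈ s.erase j, (σ - x i - x ℓ) := by
  set T : K[X] := ∏ ℓ ∈ s.erase j, (C (σ - x ℓ) - X)
  have hdeg : T.degree < #s := by
    rw [degree_prod_C_sub_X, card_erase_of_mem hj]
    exact_mod_cast Nat.sub_lt (card_pos.mpr ⟨j, hj⟩) one_pos
  have hnode : ∀ i ∈ s, σ - x j ≠ x i := fun i hi h => hD i hi (by rw [sub_right_comm, h, sub_self])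
  have hbary := congrArg (eval (σ - x j)) (eq_interpolate hx hdeg)
  rw [eval_interpolate_not_at_node _ hnode, eval_nodal] at hbary
  simp only [T, eval_prod, eval_sub, eval_C, eval_X, sub_sub_sub_cancel_left] at hbary
  rw [nodalWeight, prod_inv_distrib, inv_inv, hbary]
  refine congrArg _ (sum_congr rfl fun i _ => ?_)
  rw [sub_right_comm σ (x j), prod_congr rfl fun ℓ _ => sub_right_comm σ (x ℓ) (x i)]

theorem sum_cauchyCoeff_mul_cauchyCoeff_div_sq (hx : Set.InjOn x s) {j : ι} (hj : j ∈ s)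
    (hD : ∀ i ∈ s, σ - x i - x j ≠ 0) :
    ∑ i ∈ s, cauchyCoeff s x σ i * cauchyCoeff s x σ j / (σ - x i - x j) ^ 2 = 1 := by
  have hw : nodalWeight s x j ≠ 0 := nodalWeight_ne_zero hx hj
  have key := congrArg (· * nodalWeight s x j) (inv_nodalWeight_eq_mul_sum hx hj hD)
  simp only [inv_mul_cancel₀ hw] at key
  rw [key, mul_sum, sum_mul]
  refine sum_congr rfl fun i hi => ?_
  have hA : ∏ ℓ ∈ s, (σ - x i - x ℓ) = (σ - x i - x j) * ∏ ℓ ∈ s.erase j, (σ - x i - x ℓ) :=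
    (mul_prod_erase s _ hj).symm
  rw [cauchyCoeff_mul_cauchyCoeff hi hj, hA]
  field_simp [hD i hi]

end Cauchy

theorem ci_square_identity_general (d : ℕ) (hd : Odd d)
    (c : ℕ → ℝ)
    (hc : ∀ j, c j =
      (∏ ℓ ∈ Finset.Icc 1 (d / 4), ((d : ℝ) - 2 * (j : ℝ) - 2 * (ℓ : ℝ))) /
        ∏ ℓ ∈ (Finset.Icc 1 (d / 4)).erase j, (2 * (ℓ : ℝ) - 2 * (j : ℝ)))
    (j : ℕ) (hj1 : 1 ≤ j) (hj2 : j ≤ d / 4) :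
    (∑ i ∈ Finset.Icc 1 (d / 4),
        c i / ((d : ℝ) - 2 * (i : ℝ) - 2 * (j : ℝ)) ^ 2 = 1 / c j) ∧
    (∑ i ∈ Finset.Icc 1 (d / 4),
        (c i * c j) / ((d : ℝ) - 2 * (i : ℝ) - 2 * (j : ℝ)) ^ 2 *
          (2 * (j : ℝ) * ((d : ℝ) - 2 * (j : ℝ) - 2)) =
      2 * (j : ℝ) * ((d : ℝ) - 2 * (j : ℝ) - 2)) ∧
    2 * (j : ℝ) * ((d : ℝ) - 2 * (j : ℝ) - 2) ≠ 0 := by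
  obtain rfl : c = cauchyCoeff (Icc 1 (d / 4)) (fun ℓ : ℕ => 2 * (ℓ : ℝ)) d := funext hc
  have hD := hd.natCast_sub_two_mul_sub_two_mul_ne_zero (R := ℝ)
  have hinj : Set.InjOn (fun ℓ : ℕ => 2 * (ℓ : ℝ)) (Icc 1 (d / 4)) := fun a _ b _ h => by
    simpa using h
  have hsum := sum_cauchyCoeff_mul_cauchyCoeff_div_sq hinj (mem_Icc.mpr ⟨hj1, hj2⟩)
    fun i _ => hD i j
  refine ⟨eq_one_div_of_mul_eq_one_left ?_, by rw [← sum_mul, hsum, one_mul], ?_⟩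
  · simpa only [sum_mul, mul_div_right_comm] using hsum
  · exact mul_ne_zero (by positivity) (by simpa using hD j 1)

/-- For `d` a positive odd integer, `k = ⌊d/4⌋ ≥ 1`, and the coefficients
`c j = (∏_{1≤ℓ≤k} (d - 2j - 2ℓ)) / (∏_{1≤ℓ≤k, ℓ≠j} (2ℓ - 2j))`, for every `1 ≤ j ≤ k` one has
`∑_{i=1}^{k} c i / (d - 2i - 2j)² = 1 / c j`; in particular
`∑_{i=1}^{k} (c i · c j)/((d - 2i - 2j)²) · 2j(d - 2j - 2) = 2j(d - 2j - 2) ≠ 0`. -/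
theorem ci_square_identity (d : ℕ) (hd : Odd d) (hd0 : 0 < d) (hk : 1 ≤ d / 4)
    (c : ℕ → ℝ)
    (hc : ∀ j, c j =
      (∏ ℓ ∈ Finset.Icc 1 (d / 4), ((d : ℝ) - 2 * (j : ℝ) - 2 * (ℓ : ℝ))) /
        ∏ ℓ ∈ (Finset.Icc 1 (d / 4)).erase j, (2 * (ℓ : ℝ) - 2 * (j : ℝ)))
    (j : ℕ) (hj1 : 1 ≤ j) (hj2 : j ≤ d / 4) :
    (∑ i ∈ Finset.Icc 1 (d / 4),
        c i / ((d : ℝ) - 2 * (i : ℝ) - 2 * (j : ℝ)) ^ 2 = 1 / c j) ∧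
    (∑ i ∈ Finset.Icc 1 (d / 4),
        (c i * c j) / ((d : ℝ) - 2 * (i : ℝ) - 2 * (j : ℝ)) ^ 2 *
          (2 * (j : ℝ) * ((d : ℝ) - 2 * (j : ℝ) - 2)) =
      2 * (j : ℝ) * ((d : ℝ) - 2 * (j : ℝ) - 2)) ∧
    2 * (j : ℝ) * ((d : ℝ) - 2 * (j : ℝ) - 2) ≠ 0 :=
  ci_square_identity_general d hd c hc j hj1 hj2
end

section
/- Let d ≥ 7 be an odd integer and k̃ = ⌊(d+2)/4⌋. Suppose a_1,...,a_{k̃} are real numbers satisfying, for all 1 ≤ i, m ≤ k̃, ∑_{j=1}^{k̃} a_j (d - 2j)/(d + 2 - 2i - 2j) = ∑_{j=1}^{k̃} a_j (d - 2j)/(d + 2 - 2m - 2j). Then there exist positive constants c_1(d), c_2(d) depending only on d such that c_1(d) ∑_{j=1}^{k̃} a_j^2 ≤ (∑_{j=1}^{k̃} a_j)^2 ≤ c_2(d) ∑_{j=1}^{k̃} a_j^2. In fact, ∑_{j=1}^{k̃} a_j = a_1 ∏_{ℓ=1}^{k̃-1} (2ℓ)/(d - 2 - 2ℓ) and a_1^2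 is comparable to ∑_j a_j^2. -/
/-!
Put `x j = 2j`, `y i = d + 2 - 2i` and `b j = a j (d - 2j)`, so that `y 1 - x j = d - 2j`: the
hypothesis says that `∑_j b j / (y i - x j)` takes the same value `c = ∑_j a j` at the `k̃`
distinct points `y i`. Clearing denominators,
`∑_j b j ∏_{l ≠ j} (X - x l) - c (∏_j (X - x j) - ∏_i (X - y i))` has degree `< k̃` and
vanishes at every `y i`, so it is zero; evaluating it at `x j` gives `a j = c w j` with weights
`w j` depending only on `d`. Hence `∑ (a j)² = c² ∑ (w j)²` and `(a 1)² = c² (w 1)²`, and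
`w 1 = ∏_ℓ (d - 2 - 2ℓ) / (2ℓ)` is nonzero.
-/

open Finset Polynomial

section PartialFractions

variable {ι F : Type*} [Field F] [DecidableEq ι]

theorem mul_prod_erase_sub_eq_of_sum_div_sub_eq {s : Finset ι} {x y b : ι → F} {c : F}
    (hy : Set.InjOn y s) (hxy : ∀ i ∈ s, ∀ j ∈ s, y i ≠ x j)
    (h : ∀ i ∈ s, ∑ j ∈ s, b j / (y i - x j) = c) {j : ι} (hj : j ∈ s) :
    b j * ∏ l ∈ s.erase j, (x j - x l) = -c * ∏ i ∈ s, (x j - y i) := by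
  set p : F[X] := ∑ l ∈ s, b l • Lagrange.nodal (s.erase l) x
  set q : F[X] := c • (Lagrange.nodal s x - Lagrange.nodal s y)
  have hp : p.degree < #s := by
    refine (degree_sum_le _ _).trans_lt
      ((Finset.sup_lt_iff (WithBot.bot_lt_coe _)).2 fun l hl => ?_)
    refine (degree_smul_le _ _).trans_lt ?_
    rw [Lagrange.degree_nodal, card_erase_of_mem hl, Nat.cast_lt]
    exact Nat.sub_lt (card_pos.2 ⟨l, hl⟩) one_pos
  have hq : q.degree < #s := by
    refine (degree_smul_le _ _).trans_lt ?_
    have := degree_sub_lt_left (p := Lagrange.nodal s x) (q := Lagrange.nodal s y)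
      (by rw [Lagrange.degree_nodal, Lagrange.degree_nodal]) Lagrange.nodal_ne_zero
      (by rw [Lagrange.nodal_monic.leadingCoeff, Lagrange.nodal_monic.leadingCoeff])
    rwa [Lagrange.degree_nodal] at this
  have hpq : p = q := by
    refine eq_of_degree_sub_lt_of_eval_index_eq s hy
      ((degree_sub_le _ _).trans_lt (max_lt hp hq)) fun i hi => ?_
    have hN : ∀ l ∈ s, b l * eval (y i) (Lagrange.nodal (s.erase l) x) =
        b l / (y i - x l) * eval (y i) (Lagrange.nodal s x) := by
      intro l hl
      rw [Lagrange.eval_nodal, Lagrange.eval_nodal, ← mul_prod_erase s _ hl, div_mul_eq_mul_div,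
        mul_left_comm, mul_div_cancel_left₀ _ (sub_ne_zero.2 (hxy i hi l hl))]
    simp only [p, q, eval_finsetSum, eval_smul, smul_eq_mul, eval_sub, Finset.sum_congr rfl hN,
      ← Finset.sum_mul, h i hi, Lagrange.eval_nodal_at_node hi, sub_zero]
  have hpx : p.eval (x j) = b j * ∏ l ∈ s.erase j, (x j - x l) := by
    rw [eval_finsetSum, Finset.sum_eq_single_of_mem j hj fun l _ hlj => ?_, eval_smul, smul_eq_mul,
      Lagrange.eval_nodal]
    rw [eval_smul, Lagrange.eval_nodal_at_node (mem_erase.2 ⟨hlj.symm, hj⟩), smul_zero]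
  rw [← hpx, hpq]
  simp only [q, eval_smul, smul_eq_mul, eval_sub, Lagrange.eval_nodal_at_node hj,
    Lagrange.eval_nodal]
  ring

end PartialFractions

theorem Odd.cast_sub_two_mul_ne_zero {R : Type*} [Ring R] [CharZero R] {d : ℕ} (hd : Odd d)
    (n : ℤ) : (d : R) - 2 * n ≠ 0 := by
  obtain ⟨t, rfl⟩ := hd
  intro h
  have : (2 * t + 1 : ℤ) = 2 * n := by exact_mod_cast sub_eq_zero.1 h
  omega

theorem prod_Icc_one_erase_one {M : Type*} [CommMonoid M] (k : ℕ) (f : ℕ → M) :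
    ∏ i ∈ (Icc 1 k).erase 1, f i = ∏ l ∈ Icc 1 (k - 1), f (l + 1) := by
  rcases k with _ | k
  · simp
  · rw [Icc_erase_left, ← Icc_add_one_left_eq_Ioc, Nat.add_sub_cancel, ← map_add_right_Icc,
      prod_map]
    rfl

theorem sq_comparable_of_eq_mul {ι : Type*} {s : Finset ι} {w : ι → ℝ} {i : ι} (hi : i ∈ s)
    (hw : w i ≠ 0) :
    ∃ c₁ c₂ : ℝ, 0 < c₁ ∧ 0 < c₂ ∧ ∀ (a : ι → ℝ) (t : ℝ), (∀ j ∈ s, a j = t * w j) →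
      c₁ * ∑ j ∈ s, a j ^ 2 ≤ t ^ 2 ∧ t ^ 2 ≤ c₂ * ∑ j ∈ s, a j ^ 2 ∧
        c₁ * ∑ j ∈ s, a j ^ 2 ≤ a i ^ 2 ∧ a i ^ 2 ≤ c₂ * ∑ j ∈ s, a j ^ 2 := by
  set W := ∑ j ∈ s, w j ^ 2
  have hW : 0 < W := sum_pos' (fun j _ => sq_nonneg _) ⟨i, hi, by positivity⟩
  refine ⟨min 1 (w i ^ 2) / W, max 1 (w i ^ 2) / W, by positivity,
    div_pos (one_pos.trans_le (le_max_left _ _)) hW, fun a t ha => ?_⟩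
  have hscale (r : ℝ) : r / W * ∑ j ∈ s, a j ^ 2 = r * t ^ 2 := by
    rw [sum_congr rfl fun j hj => by rw [ha j hj, mul_pow], ← mul_sum, mul_left_comm,
      div_mul_cancel₀ r hW.ne', mul_comm]
  have hai : a i ^ 2 = w i ^ 2 * t ^ 2 := by rw [ha i hi]; ring
  simp only [hscale, hai]
  exact ⟨mul_le_of_le_one_left (sq_nonneg t) (min_le_left _ _),
    le_mul_of_one_le_left (sq_nonneg t) (le_max_left _ _),
    mul_le_mul_of_nonneg_right (min_le_right _ _) (sq_nonneg t),
    mul_le_mul_of_nonneg_right (le_max_right _ _) (sq_nonneg t)⟩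

noncomputable def solutionWeight (d k j : ℕ) : ℝ :=
  -(∏ i ∈ Icc 1 k, (2 * j - (d + 2 - 2 * i) : ℝ)) /
    ((d - 2 * j) * ∏ l ∈ (Icc 1 k).erase j, (2 * j - 2 * l : ℝ))

section Specialization

variable {d k : ℕ}

theorem eq_sum_mul_solutionWeight (hd : Odd d) (hk : 1 ≤ k) {a : ℕ → ℝ}
    (ha : ∀ i ∈ Icc 1 k, ∀ m ∈ Icc 1 k,
      ∑ j ∈ Icc 1 k, a j * ((d : ℝ) - 2 * (j : ℝ)) / ((d : ℝ) + 2 - 2 * (i : ℝ) - 2 * (j : ℝ)) =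
        ∑ j ∈ Icc 1 k, a j * ((d : ℝ) - 2 * (j : ℝ)) / ((d : ℝ) + 2 - 2 * (m : ℝ) - 2 * (j : ℝ)))
    {j : ℕ} (hj : j ∈ Icc 1 k) :
    a j = (∑ j ∈ Icc 1 k, a j) * solutionWeight d k j := by
  have hdj (n : ℕ) : (d : ℝ) - 2 * n ≠ 0 := by exact_mod_cast hd.cast_sub_two_mul_ne_zero (R := ℝ) n
  have hyx (i l : ℕ) : (d + 2 - 2 * i : ℝ) ≠ 2 * l := fun h =>
    hd.cast_sub_two_mul_ne_zero (R := ℝ) (i + l - 1) (by push_cast; linarith)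
  have hsum (i : ℕ) (hi : i ∈ Icc 1 k) :
      ∑ j ∈ Icc 1 k, a j * ((d : ℝ) - 2 * j) / ((d + 2 - 2 * i : ℝ) - 2 * j) =
        ∑ j ∈ Icc 1 k, a j := by
    rw [ha i hi 1 (left_mem_Icc.2 hk)]
    refine sum_congr rfl fun j _ => ?_
    rw [Nat.cast_one, mul_one, add_sub_cancel_right, mul_div_assoc, div_self (hdj j), mul_one]
  have hkey := mul_prod_erase_sub_eq_of_sum_div_sub_eq (x := fun j : ℕ => (2 * j : ℝ))
    (y := fun i : ℕ => (d + 2 - 2 * i : ℝ)) (fun i _ l _ hil => by simpa using hil)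
    (fun i _ l _ => hyx i l) hsum hj
  have hprod : ∏ l ∈ (Icc 1 k).erase j, (2 * j - 2 * l : ℝ) ≠ 0 :=
    prod_ne_zero_iff.2 fun l hl => by simpa [sub_eq_zero] using (mem_erase.1 hl).1.symm
  rw [solutionWeight, mul_div_assoc', eq_div_iff (mul_ne_zero (hdj j) hprod)]
  linear_combination hkey

theorem solutionWeight_one (hd : Odd d) (hk : 1 ≤ k) :
    solutionWeight d k 1 = ∏ l ∈ Icc 1 (k - 1), ((d : ℝ) - 2 - 2 * l) / (2 * l) := by
  have hd2 : (d : ℝ) - 2 * 1 ≠ 0 := by exact_mod_cast hd.cast_sub_two_mul_ne_zero (R := ℝ) 1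
  rw [solutionWeight, ← mul_prod_erase _ _ (left_mem_Icc.2 hk), prod_Icc_one_erase_one,
    prod_Icc_one_erase_one, prod_congr rfl fun l _ => (neg_div_neg_eq _ _).symm, prod_div_distrib]
  push_cast
  rw [show (2 * 1 - (d + 2 - 2 * 1) : ℝ) = -(d - 2 * 1) by ring, neg_mul, neg_neg,
    mul_div_mul_left _ _ hd2]
  congr 1 <;> refine prod_congr rfl fun l _ => by ring

theorem solutionWeight_one_mul_prod (hd : Odd d) (hk : 1 ≤ k) :
    solutionWeight d k 1 * ∏ l ∈ Icc 1 (k - 1), (2 * (l : ℝ)) / ((d : ℝ) - 2 - 2 * (l : ℝ)) =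
      1 := by
  rw [solutionWeight_one hd hk, ← prod_mul_distrib]
  refine prod_eq_one fun l hl => ?_
  have h2l : (2 * l : ℝ) ≠ 0 := by have := (mem_Icc.1 hl).1; positivity
  have hdl : (d : ℝ) - 2 - 2 * l ≠ 0 := fun h =>
    hd.cast_sub_two_mul_ne_zero (R := ℝ) (l + 1) (by push_cast; linarith)
  rw [div_mul_div_cancel₀ h2l, div_self hdl]

end Specialization

/-- Let `d ≥ 7` be odd and `k̃ = ⌊(d+2)/4⌋`. If `a 1, …, a k̃` satisfy that
`∑_j a j (d - 2j)/(d + 2 - 2i - 2j)` is independent of `i ∈ [1, k̃]`, then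
`(∑ a j)²` is comparable to `∑ (a j)²` with constants depending only on `d`;
moreover `∑ a j = a 1 ∏_{ℓ=1}^{k̃-1} (2ℓ)/(d - 2 - 2ℓ)` and `(a 1)²` is
comparable to `∑ (a j)²`. -/
theorem a_comparability (d : ℕ) (hd : Odd d) (hd7 : 7 ≤ d) :
    ∃ c₁ c₂ : ℝ, 0 < c₁ ∧ 0 < c₂ ∧
      ∀ a : ℕ → ℝ,
        (∀ i ∈ Finset.Icc 1 ((d + 2) / 4), ∀ m ∈ Finset.Icc 1 ((d + 2) / 4),
          ∑ j ∈ Finset.Icc 1 ((d + 2) / 4),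
              a j * ((d : ℝ) - 2 * (j : ℝ)) / ((d : ℝ) + 2 - 2 * (i : ℝ) - 2 * (j : ℝ)) =
            ∑ j ∈ Finset.Icc 1 ((d + 2) / 4),
              a j * ((d : ℝ) - 2 * (j : ℝ)) / ((d : ℝ) + 2 - 2 * (m : ℝ) - 2 * (j : ℝ))) →
        (c₁ * ∑ j ∈ Finset.Icc 1 ((d + 2) / 4), (a j) ^ 2 ≤
            (∑ j ∈ Finset.Icc 1 ((d + 2) / 4), a j) ^ 2 ∧
          (∑ j ∈ Finset.Icc 1 ((d + 2) / 4), a j) ^ 2 ≤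
            c₂ * ∑ j ∈ Finset.Icc 1 ((d + 2) / 4), (a j) ^ 2 ∧
          (∑ j ∈ Finset.Icc 1 ((d + 2) / 4), a j) =
            a 1 * ∏ ℓ ∈ Finset.Icc 1 ((d + 2) / 4 - 1),
              (2 * (ℓ : ℝ)) / ((d : ℝ) - 2 - 2 * (ℓ : ℝ)) ∧
          c₁ * ∑ j ∈ Finset.Icc 1 ((d + 2) / 4), (a j) ^ 2 ≤ (a 1) ^ 2 ∧
          (a 1) ^ 2 ≤ c₂ * ∑ j ∈ Finset.Icc 1 ((d + 2) / 4), (a j) ^ 2) := by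
  set k := (d + 2) / 4
  have hk : 1 ≤ k := by omega
  have hprod := solutionWeight_one_mul_prod hd hk
  obtain ⟨c₁, c₂, hc₁, hc₂, hcomp⟩ :=
    sq_comparable_of_eq_mul (left_mem_Icc.2 hk) (left_ne_zero_of_mul_eq_one hprod)
  refine ⟨c₁, c₂, hc₁, hc₂, fun a ha => ?_⟩
  have hrep := fun j hj => eq_sum_mul_solutionWeight hd hk ha (j := j) hj
  obtain ⟨h₁, h₂, h₃, h₄⟩ := hcomp a _ hrep
  refine ⟨h₁, h₂, ?_, h₃, h₄⟩
  rw [hrep 1 (left_mem_Icc.2 hk), mul_assoc, hprod, mul_one]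
end

section
/- Let d ≥ 7 be an odd integer and k = ⌊d/4⌋. Suppose b_1,...,b_k are real numbers satisfying, for all 1 ≤ i, m ≤ k, ∑_{j=1}^{k} b_j/(d - 2i - 2j) = ∑_{j=1}^{k} b_j/(d - 2m - 2j). Then there exist positive constants c_1(d), c_2(d) depending only on d with c_1(d) ∑_{j=1}^{k} b_j^2 ≤ (∑_{j=1}^{k} b_j/(d - 2 - 2j))^2 ≤ c_2(d) ∑_{j=1}^{k} b_j^2. -/
open Finset Polynomial Lagrange

/-! The hypothesis cuts out a linear subspace `V` of coefficient vectors, on which the functional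
`L b = ∑ j, b j / (d - 2 - 2j)` is injective: if `L b = 0`, all the sums
`∑ j, b j / ((d - 2i) - 2j)` vanish, and a square Cauchy matrix with nodes `d - 2i ≠ 2j` is
nonsingular. Hence `dim V ≤ 1`, so `L b ^ 2 / ∑ j, b j ^ 2` is constant on `V \ {0}`, which gives
the lower bound; the upper bound is Cauchy–Schwarz. -/

theorem eq_zero_of_forall_sum_div_sub_eq_zero {K ι κ : Type*} [Field K] [DecidableEq κ]
    {s : Finset ι} {t : Finset κ} {x : ι → K} {y : κ → K}
    (hx : Set.InjOn x s) (hy : Set.InjOn y t) (hxy : ∀ i ∈ s, ∀ j ∈ t, x i ≠ y j)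
    (hcard : #t ≤ #s) {b : κ → K} (hb : ∀ i ∈ s, ∑ j ∈ t, b j / (x i - y j) = 0) :
    ∀ j ∈ t, b j = 0 := by
  -- Up to the nonzero nodal weights, `b` is the value vector of an interpolant of degree
  -- `< #t`, which by the barycentric formula vanishes at the `#s` points `x i`.
  let r j := (nodalWeight t y j)⁻¹ * b j
  have hp : interpolate t y r = 0 := by
    refine eq_zero_of_degree_lt_of_eval_index_eq_zero s hx
      ((degree_interpolate_lt _ hy).trans_le (by exact_mod_cast hcard)) fun i hi => ?_
    have hsum : ∑ j ∈ t, nodalWeight t y j * (x i - y j)⁻¹ * r j =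
        ∑ j ∈ t, b j / (x i - y j) := sum_congr rfl fun j hj => by
      rw [div_eq_inv_mul, mul_comm _ (x i - y j)⁻¹, mul_assoc,
        mul_inv_cancel_left₀ (nodalWeight_ne_zero hy hj)]
    rw [eval_interpolate_not_at_node _ fun j hj => hxy i hi j hj, hsum, hb i hi, mul_zero]
  intro j hj
  have := eval_interpolate_at_node r hy hj
  rw [hp, eval_zero] at this
  simpa [r, nodalWeight_ne_zero hy hj] using this.symm

def sumDiv {K ι : Type*} [Field K] (s : Finset ι) (z : ι → K) : (ι → K) →ₗ[K] K where
  toFun b := ∑ j ∈ s, b j / z j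
  map_add' b b' := by simp only [Pi.add_apply, add_div, sum_add_distrib]
  map_smul' c b := by simp only [Pi.smul_apply, smul_eq_mul, mul_div_assoc, ← mul_sum,
    RingHom.id_apply]

theorem exists_pos_sq_sumDiv_le {K ι : Type*} [Field K] [LinearOrder K] [IsStrictOrderedRing K]
    (s : Finset ι) (z : ι → K) : ∃ c > 0, ∀ b, sumDiv s z b ^ 2 ≤ c * ∑ j ∈ s, b j ^ 2 := by
  refine ⟨∑ j ∈ s, (z j)⁻¹ ^ 2 + 1, by positivity, fun b => ?_⟩
  have hQ : 0 ≤ ∑ j ∈ s, b j ^ 2 := by positivity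
  calc sumDiv s z b ^ 2 = (∑ j ∈ s, b j * (z j)⁻¹) ^ 2 := by
        simp only [sumDiv, div_eq_mul_inv]; rfl
    _ ≤ (∑ j ∈ s, b j ^ 2) * ∑ j ∈ s, (z j)⁻¹ ^ 2 := sum_mul_sq_le_sq_mul_sq _ _ _
    _ ≤ (∑ j ∈ s, (z j)⁻¹ ^ 2 + 1) * ∑ j ∈ s, b j ^ 2 := by nlinarith

section RankOne

variable {K ι : Type*} [Field K] {s : Finset ι} {V : Submodule K (ι → K)} {L : (ι → K) →ₗ[K] K}

theorem apply_mul_eq_apply_mul_of_mem (hL : ∀ b ∈ V, L b = 0 → ∀ j ∈ s, b j = 0)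
    {b b' : ι → K} (hb : b ∈ V) (hb' : b' ∈ V) : ∀ j ∈ s, L b' * b j = L b * b' j := by
  have hw : L (L b' • b - L b • b') = 0 := by simp only [map_sub, map_smul, smul_eq_mul]; ring
  intro j hj
  simpa [sub_eq_zero] using hL _ (V.sub_mem (V.smul_mem _ hb) (V.smul_mem _ hb')) hw j hj

theorem exists_pos_mul_sum_sq_le_sq [LinearOrder K] [IsStrictOrderedRing K]
    (hL : ∀ b ∈ V, L b = 0 → ∀ j ∈ s, b j = 0) :
    ∃ c > 0, ∀ b ∈ V, c * ∑ j ∈ s, b j ^ 2 ≤ L b ^ 2 := by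
  by_cases h : ∃ b₀ ∈ V, ∃ j ∈ s, b₀ j ≠ 0
  · obtain ⟨b₀, hb₀, j₀, hj₀, hb₀j₀⟩ := h
    have hQ : 0 < ∑ j ∈ s, b₀ j ^ 2 :=
      sum_pos' (fun j _ => sq_nonneg _) ⟨j₀, hj₀, by positivity⟩
    have hL₀ : L b₀ ≠ 0 := fun h => hb₀j₀ (hL b₀ hb₀ h j₀ hj₀)
    refine ⟨L b₀ ^ 2 / ∑ j ∈ s, b₀ j ^ 2, by positivity, fun b hb => le_of_eq ?_⟩
    rw [div_mul_eq_mul_div, div_eq_iff hQ.ne', mul_sum, mul_sum]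
    refine sum_congr rfl fun j hj => ?_
    rw [← mul_pow, ← mul_pow, apply_mul_eq_apply_mul_of_mem hL hb₀ hb j hj]
  · push Not at h
    refine ⟨1, one_pos, fun b hb => ?_⟩
    rw [sum_eq_zero fun j hj => by rw [h b hb j hj, zero_pow two_ne_zero], mul_zero]
    positivity

end RankOne

noncomputable def cauchySum (d k i : ℕ) : (ℕ → ℝ) →ₗ[ℝ] ℝ :=
  sumDiv (Icc 1 k) fun j => (d : ℝ) - 2 * i - 2 * j

noncomputable def solutions (d k : ℕ) : Submodule ℝ (ℕ → ℝ) :=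
  ⨅ i ∈ Icc 1 k, ⨅ m ∈ Icc 1 k, LinearMap.eqLocus (cauchySum d k i) (cauchySum d k m)

theorem mem_solutions {d k : ℕ} {b : ℕ → ℝ} :
    b ∈ solutions d k ↔ ∀ i ∈ Icc 1 k, ∀ m ∈ Icc 1 k, cauchySum d k i b = cauchySum d k m b := by
  simp only [solutions, Submodule.mem_iInf, LinearMap.mem_eqLocus]

theorem eq_zero_of_mem_solutions {d k : ℕ} (hd : Odd d) {b : ℕ → ℝ} (hb : b ∈ solutions d k)
    (h : sumDiv (Icc 1 k) (fun j => (d : ℝ) - 2 - 2 * j) b = 0) : ∀ j ∈ Icc 1 k, b j = 0 := by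
  refine eq_zero_of_forall_sum_div_sub_eq_zero (x := fun i : ℕ => (d : ℝ) - 2 * i)
    (y := fun j : ℕ => 2 * (j : ℝ)) ?_ ?_ ?_ le_rfl fun i hi => ?_
  · intro i _ m _ him
    simpa using him
  · intro i _ m _ him
    simpa using him
  · intro i _ j _ hij
    obtain ⟨n, rfl⟩ := hd
    have : (2 * n + 1 : ℝ) = 2 * (i + j) := by push_cast at hij; linarith
    norm_cast at this
    omega
  · have h1 : 1 ∈ Icc 1 k := by grind
    rw [← h]
    simpa [cauchySum, sumDiv] using mem_solutions.1 hb i hi 1 h1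

theorem b_comparability_general (d : ℕ) (hd : Odd d) :
    ∃ c₁ c₂ : ℝ, 0 < c₁ ∧ 0 < c₂ ∧
      ∀ b : ℕ → ℝ,
        (∀ i ∈ Finset.Icc 1 (d / 4), ∀ m ∈ Finset.Icc 1 (d / 4),
          ∑ j ∈ Finset.Icc 1 (d / 4),
              b j / ((d : ℝ) - 2 * (i : ℝ) - 2 * (j : ℝ)) =
            ∑ j ∈ Finset.Icc 1 (d / 4),
              b j / ((d : ℝ) - 2 * (m : ℝ) - 2 * (j : ℝ))) →
        (c₁ * ∑ j ∈ Finset.Icc 1 (d / 4), (b j) ^ 2 ≤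
            (∑ j ∈ Finset.Icc 1 (d / 4), b j / ((d : ℝ) - 2 - 2 * (j : ℝ))) ^ 2 ∧
          (∑ j ∈ Finset.Icc 1 (d / 4), b j / ((d : ℝ) - 2 - 2 * (j : ℝ))) ^ 2 ≤
            c₂ * ∑ j ∈ Finset.Icc 1 (d / 4), (b j) ^ 2) := by
  obtain ⟨c₁, hc₁, hlower⟩ := exists_pos_mul_sum_sq_le_sq (V := solutions d (d / 4))
    fun b hb => eq_zero_of_mem_solutions hd hb
  obtain ⟨c₂, hc₂, hupper⟩ := exists_pos_sq_sumDiv_le (Icc 1 (d / 4)) fun j => (d : ℝ) - 2 - 2 * j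
  exact ⟨c₁, c₂, hc₁, hc₂, fun b hb => ⟨hlower b (mem_solutions.2 hb), hupper b⟩⟩

/-- Let `d ≥ 7` be odd and `k = ⌊d/4⌋`. If `b 1, …, b k` satisfy that
`∑_j b j/(d - 2i - 2j)` is independent of `i ∈ [1, k]`, then
`(∑_j b j/(d - 2 - 2j))²` is comparable to `∑_j (b j)²` with constants depending
only on `d`. -/
theorem b_comparability (d : ℕ) (hd : Odd d) (hd7 : 7 ≤ d) :
    ∃ c₁ c₂ : ℝ, 0 < c₁ ∧ 0 < c₂ ∧
      ∀ b : ℕ → ℝ,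
        (∀ i ∈ Finset.Icc 1 (d / 4), ∀ m ∈ Finset.Icc 1 (d / 4),
          ∑ j ∈ Finset.Icc 1 (d / 4),
              b j / ((d : ℝ) - 2 * (i : ℝ) - 2 * (j : ℝ)) =
            ∑ j ∈ Finset.Icc 1 (d / 4),
              b j / ((d : ℝ) - 2 * (m : ℝ) - 2 * (j : ℝ))) →
        (c₁ * ∑ j ∈ Finset.Icc 1 (d / 4), (b j) ^ 2 ≤
            (∑ j ∈ Finset.Icc 1 (d / 4), b j / ((d : ℝ) - 2 - 2 * (j : ℝ))) ^ 2 ∧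
          (∑ j ∈ Finset.Icc 1 (d / 4), b j / ((d : ℝ) - 2 - 2 * (j : ℝ))) ^ 2 ≤
            c₂ * ∑ j ∈ Finset.Icc 1 (d / 4), (b j) ^ 2) :=
  b_comparability_general d hd
end

section
/- Let d be a positive odd integer and k̃ = ⌊(d+2)/4⌋. For R > 0, the Gram matrix Ã(R) of the functions r^{2i - d} (i = 1,...,k̃) with respect to the Ḣ^1 inner product ⟨f,g⟩ = ∫_R^∞ f'(r) g'(r) r^{d-1} dr has entries Ã(R)_{ij} = (2i - d)(2j - d) R^{2i + 2j - d - 2}/(d + 2 - 2i - 2j), and Ã(R) is positive definite. -/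
open MeasureTheory Matrix

/-! On `(R, ∞)` the integrand is the single power `a b r^(a+b+p-2)`, which integrates in closed
form. For positive definiteness, the entries factor as `uᵢ uⱼ / (eᵢ + eⱼ + 1)` with `uᵢ ≠ 0` and
`eᵢ = (d + 1)/2 - 2i`, distinct natural numbers because `d` is odd and `i ≤ k̃`. The matrix
`1 / (eᵢ + eⱼ + 1)` is the Gram matrix of the monomials `t^(eᵢ)` in `L²(0, 1)`: its quadratic form
at `v ≠ 0` is `∫₀¹ P²` for the nonzero polynomial `P = ∑ vᵢ t^(eᵢ)`. -/

theorem integral_Ioi_deriv_rpow_mul_deriv_rpow_mul_rpow {R : ℝ} (hR : 0 < R) {a b p : ℝ}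
    (h : a + b + p < 1) :
    ∫ r in Set.Ioi R, deriv (fun r : ℝ => r ^ a) r * deriv (fun r : ℝ => r ^ b) r * r ^ p =
      a * b * R ^ (a + b + p - 1) / (1 - a - b - p) := by
  have hintegrand : Set.EqOn
      (fun r => deriv (fun r : ℝ => r ^ a) r * deriv (fun r : ℝ => r ^ b) r * r ^ p)
      (fun r => a * b * r ^ (a + b + p - 2)) (Set.Ioi R) := by
    intro r hr
    have hr0 : 0 < r := hR.trans hr
    dsimp only
    rw [Real.deriv_rpow_const, Real.deriv_rpow_const,
      show a + b + p - 2 = (a - 1) + ((b - 1) + p) by ring, Real.rpow_add hr0, Real.rpow_add hr0]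
    ring
  rw [setIntegral_congr_fun measurableSet_Ioi hintegrand, integral_const_mul,
    integral_Ioi_rpow_of_lt (by linarith) hR, show a + b + p - 2 + 1 = a + b + p - 1 by ring,
    show 1 - a - b - p = -(a + b + p - 1) by ring, div_neg]
  ring

theorem Polynomial.integral_sq_eval_pos {P : Polynomial ℝ} (hP : P ≠ 0) {a b : ℝ} (hab : a < b) :
    0 < ∫ t in a..b, P.eval t ^ 2 := by
  obtain ⟨c, hc, hroot⟩ := (Set.Icc_infinite hab).exists_notMem_finset P.roots.toFinset
  refine intervalIntegral.integral_pos hab (P.continuous.pow 2).continuousOn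
    (fun t _ => sq_nonneg _) ⟨c, hc, sq_pos_of_ne_zero ?_⟩
  simpa [hP] using hroot

theorem integral_sq_sum_mul_pow {ι : Type*} [Fintype ι] (v : ι → ℝ) (e : ι → ℕ) :
    ∫ t in (0 : ℝ)..1, (∑ i, v i * t ^ e i) ^ 2 =
      ∑ i, ∑ j, v i * v j * ((e i : ℝ) + e j + 1)⁻¹ := by
  have hexpand : ∀ t : ℝ, (∑ i, v i * t ^ e i) ^ 2 = ∑ i, ∑ j, v i * v j * t ^ (e i + e j) := by
    intro t
    rw [sq, Finset.sum_mul_sum]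
    refine Finset.sum_congr rfl fun i _ => Finset.sum_congr rfl fun j _ => ?_
    ring
  simp_rw [hexpand]
  rw [intervalIntegral.integral_finsetSum fun i _ => ?_]
  · refine Finset.sum_congr rfl fun i _ => ?_
    rw [intervalIntegral.integral_finsetSum fun j _ => ?_]
    · simp [integral_pow, div_eq_mul_inv]
    · exact (continuous_const.mul (continuous_pow _)).intervalIntegrable _ _
  · exact (continuous_finsetSum _ fun j _ =>
      continuous_const.mul (continuous_pow _)).intervalIntegrable _ _

theorem Matrix.posDef_of_inv_add_add_one {ι : Type*} [Fintype ι] {e : ι → ℕ}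
    (he : Function.Injective e) :
    (of fun i j => ((e i : ℝ) + e j + 1)⁻¹).PosDef := by
  classical
  refine posDef_iff_dotProduct_mulVec.mpr ⟨?_, fun v hv => ?_⟩
  · ext i j
    simp [add_comm (e i : ℝ)]
  set P : Polynomial ℝ := ∑ i, Polynomial.C (v i) * Polynomial.X ^ e i
  have hPeval : ∀ t, P.eval t = ∑ i, v i * t ^ e i := by simp [P, Polynomial.eval_finsetSum]
  have hPcoeff : ∀ i, P.coeff (e i) = v i := by
    intro i
    simp [P, Polynomial.coeff_X_pow, he.eq_iff]
  obtain ⟨i, hi⟩ := Function.ne_iff.mp hv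
  have hP : P ≠ 0 := fun h => hi (by simpa [h] using (hPcoeff i).symm)
  have hform : star v ⬝ᵥ (of (fun i j => ((e i : ℝ) + e j + 1)⁻¹) *ᵥ v) =
      ∫ t in (0 : ℝ)..1, P.eval t ^ 2 := by
    simp only [hPeval, integral_sq_sum_mul_pow, dotProduct, mulVec, of_apply,
      star_trivial, Finset.mul_sum]
    refine Finset.sum_congr rfl fun i _ => Finset.sum_congr rfl fun j _ => ?_
    ring
  exact hform ▸ P.integral_sq_eval_pos hP zero_lt_one

theorem Matrix.PosDef.star_mul_mul_of_ne_zero {n R : Type*} [Fintype n] [DecidableEq n] [Ring R]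
    [PartialOrder R] [StarRing R] [NoZeroDivisors R] {A : Matrix n n R} (hA : A.PosDef)
    {u : n → R} (hu : ∀ i, u i ≠ 0) :
    (of fun i j => star (u i) * A i j * u j).PosDef := by
  have hinj : Function.Injective (diagonal u).mulVec := by
    intro x y hxy
    funext i
    exact mul_left_cancel₀ (hu i) (by simpa only [mulVec_diagonal] using congrFun hxy i)
  convert hA.conjTranspose_mul_mul_same hinj using 1
  ext i j
  simp [mul_diagonal, diagonal_mul]

/-- The factor `uᵢ₊₁ = (2(i+1) - d) R^(2(i+1) - d/2 - 1)` for `d = 2m + 1` (indices start at 0). -/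
noncomputable def gramScale (m : ℕ) (R : ℝ) (i : ℕ) : ℝ :=
  ((2 * (i + 1) : ℝ) - (2 * m + 1 : ℕ)) * R ^ ((2 * (i + 1) : ℝ) - (2 * m + 1 : ℕ) / 2 - 1)

theorem gramScale_ne_zero (m : ℕ) {R : ℝ} (hR : 0 < R) (i : ℕ) : gramScale m R i ≠ 0 := by
  refine mul_ne_zero (sub_ne_zero.mpr ?_) (Real.rpow_pos_of_pos hR _).ne'
  have : 2 * (i + 1) ≠ 2 * m + 1 := by omega
  exact_mod_cast this

theorem gram_entry_eq_gramScale_mul {m i j : ℕ} (hi : 2 * i + 1 ≤ m) (hj : 2 * j + 1 ≤ m)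
    {R : ℝ} (hR : 0 < R) :
    ((2 * (i + 1) : ℝ) - (2 * m + 1 : ℕ)) * ((2 * (j + 1) : ℝ) - (2 * m + 1 : ℕ)) *
        R ^ ((2 * (i + 1) + 2 * (j + 1) : ℝ) - (2 * m + 1 : ℕ) - 2) /
          (((2 * m + 1 : ℕ) : ℝ) + 2 - 2 * (i + 1) - 2 * (j + 1)) =
      gramScale m R i * (((m - (2 * i + 1) : ℕ) : ℝ) + (m - (2 * j + 1) : ℕ) + 1)⁻¹ *
        gramScale m R j := by
  have hpow : R ^ ((2 * (i + 1) + 2 * (j + 1) : ℝ) - (2 * m + 1 : ℕ) - 2) =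
      R ^ ((2 * (i + 1) : ℝ) - (2 * m + 1 : ℕ) / 2 - 1) *
        R ^ ((2 * (j + 1) : ℝ) - (2 * m + 1 : ℕ) / 2 - 1) := by
    rw [← Real.rpow_add hR]
    ring_nf
  rw [gramScale, gramScale, hpow, Nat.cast_sub hi, Nat.cast_sub hj]
  push_cast
  ring

theorem gram_matrix_H1_general (d : ℕ) (hd : Odd d) (R : ℝ) (hR : 0 < R) :
    (∀ i j : Fin ((d + 2) / 4),
      ∫ r in Set.Ioi R,
          deriv (fun r : ℝ => r ^ ((2 * ((i : ℕ) + 1) : ℝ) - d)) r *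
            deriv (fun r : ℝ => r ^ ((2 * ((j : ℕ) + 1) : ℝ) - d)) r *
              r ^ ((d : ℝ) - 1) =
        ((2 * ((i : ℕ) + 1) : ℝ) - d) * ((2 * ((j : ℕ) + 1) : ℝ) - d) *
          R ^ ((2 * ((i : ℕ) + 1) + 2 * ((j : ℕ) + 1) : ℝ) - d - 2) /
            ((d : ℝ) + 2 - 2 * ((i : ℕ) + 1) - 2 * ((j : ℕ) + 1))) ∧
    Matrix.PosDef
      (Matrix.of fun i j : Fin ((d + 2) / 4) =>
        ((2 * ((i : ℕ) + 1) : ℝ) - d) * ((2 * ((j : ℕ) + 1) : ℝ) - d) *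
          R ^ ((2 * ((i : ℕ) + 1) + 2 * ((j : ℕ) + 1) : ℝ) - d - 2) /
            ((d : ℝ) + 2 - 2 * ((i : ℕ) + 1) - 2 * ((j : ℕ) + 1))) := by
  obtain ⟨m, rfl⟩ := hd
  have hbound : ∀ i : Fin ((2 * m + 1 + 2) / 4), 2 * (i : ℕ) + 1 ≤ m := fun i => by
    have := i.isLt
    omega
  refine ⟨fun i j => ?_, ?_⟩
  · have hi : 2 * (i : ℝ) + 1 ≤ m := by exact_mod_cast hbound i
    have hj : 2 * (j : ℝ) + 1 ≤ m := by exact_mod_cast hbound j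
    rw [integral_Ioi_deriv_rpow_mul_deriv_rpow_mul_rpow hR (by push_cast; linarith)]
    congr 1
    · congr 2
      ring
    · ring
  · have he : Function.Injective fun i : Fin ((2 * m + 1 + 2) / 4) => m - (2 * (i : ℕ) + 1) :=
      fun i j h => Fin.ext (by have := hbound i; have := hbound j; simp only at h; omega)
    convert (posDef_of_inv_add_add_one he).star_mul_mul_of_ne_zero (gramScale_ne_zero m hR ·)
      using 1
    ext i j
    simp only [of_apply, star_trivial]
    exact gram_entry_eq_gramScale_mul (hbound i) (hbound j) hR

/-- For `d` a positive odd integer, `k̃ = ⌊(d+2)/4⌋`, and `R > 0`: the Gram matrix of the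
functions `r ^ (2i - d)` (for `1 ≤ i ≤ k̃`) with respect to the `Ḣ¹` inner product
`⟨f,g⟩ = ∫_R^∞ f' g' r^(d-1) dr` has entries
`(2i-d)(2j-d) R^(2i+2j-d-2)/(d+2-2i-2j)`, and this matrix is positive definite. -/
theorem gram_matrix_H1 (d : ℕ) (hd : Odd d) (hd0 : 0 < d) (R : ℝ) (hR : 0 < R) :
    (∀ i j : Fin ((d + 2) / 4),
      ∫ r in Set.Ioi R,
          deriv (fun r : ℝ => r ^ ((2 * ((i : ℕ) + 1) : ℝ) - d)) r *
            deriv (fun r : ℝ => r ^ ((2 * ((j : ℕ) + 1) : ℝ) - d)) r *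
              r ^ ((d : ℝ) - 1) =
        ((2 * ((i : ℕ) + 1) : ℝ) - d) * ((2 * ((j : ℕ) + 1) : ℝ) - d) *
          R ^ ((2 * ((i : ℕ) + 1) + 2 * ((j : ℕ) + 1) : ℝ) - d - 2) /
            ((d : ℝ) + 2 - 2 * ((i : ℕ) + 1) - 2 * ((j : ℕ) + 1))) ∧
    Matrix.PosDef
      (Matrix.of fun i j : Fin ((d + 2) / 4) =>
        ((2 * ((i : ℕ) + 1) : ℝ) - d) * ((2 * ((j : ℕ) + 1) : ℝ) - d) *
          R ^ ((2 * ((i : ℕ) + 1) + 2 * ((j : ℕ) + 1) : ℝ) - d - 2) /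
            ((d : ℝ) + 2 - 2 * ((i : ℕ) + 1) - 2 * ((j : ℕ) + 1))) :=
  gram_matrix_H1_general d hd R hR
end

section
/- Let d be a positive odd integer, k̃ = ⌊(d+2)/4⌋, and let d_j be defined by d_j = (∏_{1≤ℓ≤k̃} (d + 2 - 2ℓ - 2j)) / (∏_{1≤ℓ≤k̃, ℓ≠j} (2ℓ - 2j)). Suppose u : [R, ∞) → R is smooth, decays sufficiently fast (u(r) = O(r^{2k̃ - d - 1}) and u'(r) = O(r^{2k̃ - d - 2}) as r → ∞), and define λ_j(R) = ∑_{i=1}^{k̃} (−R^{d+2−2i−2j}/((d−2j)(d+2−2i−2j))) d_i d_j ∫_R^∞ u'(r) r^{2i−2} dr. Then λ_j(R) = (d_j/(d−2j)) [ u(R) R^{d−2j} + ∑_{i=1}^{k̃−1} (2i · d_{i+1} R^{d−2i−2j}/(d−2i−2j)) ∫_R^∞ u(r) r^{2i−1} dr ]. -/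
open MeasureTheory

section AuxLambda
open Polynomial Finset MeasureTheory Set Filter Real


lemma odd_cast_ne {d : ℕ} (hd : Odd d) (z : ℤ) : (d : ℝ) ≠ 2 * (z : ℝ) := by
  intro h
  have h2 : (d : ℤ) = 2 * z := by exact_mod_cast h
  rcases hd with ⟨m, hm⟩
  omega

lemma coeff_top_eq_sum {F : Type*} [Field F] {ι : Type*} [DecidableEq ι] (s : Finset ι)
    (v : ι → F) (hvs : Set.InjOn v s) (f : F[X]) (hdeg : f.degree < s.card) :
    f.coeff (s.card - 1) = ∑ i ∈ s, f.eval (v i) * ∏ m ∈ s.erase i, (v i - v m)⁻¹ := by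
  conv_lhs => rw [Lagrange.eq_interpolate hvs hdeg]
  rw [Lagrange.interpolate_apply, Polynomial.finset_sum_coeff]
  refine Finset.sum_congr rfl fun i hi => ?_
  rw [Polynomial.coeff_C_mul]
  congr 1
  have h1 : (Lagrange.basis s v i).natDegree = s.card - 1 := Lagrange.natDegree_basis hvs hi
  rw [← h1, ← Polynomial.leadingCoeff, Lagrange.basis, Polynomial.leadingCoeff_prod]
  refine Finset.prod_congr rfl fun m hm => ?_
  rw [Lagrange.basisDivisor, Polynomial.leadingCoeff_mul, Polynomial.leadingCoeff_C,
    Polynomial.leadingCoeff_X_sub_C, mul_one]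

lemma cauchy_sum {d : ℕ} (hd : Odd d) {k j : ℕ} (hj : j ∈ Finset.Icc 1 k) :
    ∑ i ∈ Finset.Icc 1 k,
      ((∏ ℓ ∈ Finset.Icc 1 k, ((d:ℝ) + 2 - 2*(ℓ:ℝ) - 2*(i:ℝ))) /
        ∏ ℓ ∈ (Finset.Icc 1 k).erase i, (2*(ℓ:ℝ) - 2*(i:ℝ))) / ((d:ℝ) + 2 - 2*(i:ℝ) - 2*(j:ℝ))
      = 1 := by
  obtain ⟨hj1, hjk⟩ := Finset.mem_Icc.mp hj
  have hk1 : 1 ≤ k := le_trans hj1 hjk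
  set c : ℝ := (d:ℝ) + 2 - 2*(j:ℝ) with hc
  set v : ℕ → ℝ := fun i => if i = 0 then c else 2*(i:ℝ) with hv
  set s : Finset ℕ := insert 0 (Finset.Icc 1 k) with hs
  have h0 : (0:ℕ) ∉ Finset.Icc 1 k := by simp
  have hcardI : (Finset.Icc 1 k).card = k := by rw [Nat.card_Icc]; omega
  have hcard : s.card = k + 1 := by
    rw [hs, Finset.card_insert_of_notMem h0, hcardI]
  have hcne : ∀ m : ℕ, c ≠ 2*(m:ℝ) := by
    intro m h
    apply odd_cast_ne hd ((m:ℤ) + (j:ℤ) - 1)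
    push_cast
    linarith [h]
  have hvs : Set.InjOn v s := by
    intro a _ b _ hab
    by_cases ha0 : a = 0
    · by_cases hb0 : b = 0
      · rw [ha0, hb0]
      · exfalso; rw [hv] at hab; simp only [if_pos ha0, if_neg hb0] at hab
        exact hcne b hab
    · by_cases hb0 : b = 0
      · exfalso; rw [hv] at hab; simp only [if_neg ha0, if_pos hb0] at hab
        exact hcne a hab.symm
      · rw [hv] at hab; simp only [if_neg ha0, if_neg hb0] at hab
        exact_mod_cast mul_left_cancel₀ (two_ne_zero) hab
  set f : ℝ[X] := ∏ ℓ ∈ Finset.Icc 1 k, (C ((d:ℝ) + 2 - 2*(ℓ:ℝ)) - X) with hf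
  have hfeval : ∀ x : ℝ, f.eval x = ∏ ℓ ∈ Finset.Icc 1 k, ((d:ℝ) + 2 - 2*(ℓ:ℝ) - x) := by
    intro x; rw [hf, Polynomial.eval_prod]; simp
  have hC : (C (-1:ℝ) : ℝ[X]) = -1 := by simp
  have hfalt : f = C ((-1:ℝ)^k) * ∏ ℓ ∈ Finset.Icc 1 k, (X - C ((d:ℝ) + 2 - 2*(ℓ:ℝ))) := by
    have hCp : (C ((-1:ℝ)^k) : ℝ[X]) = ∏ _ℓ ∈ Finset.Icc 1 k, (C (-1:ℝ)) := by
      rw [Finset.prod_const, hcardI, ← C_pow]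
    rw [hf, hCp, ← Finset.prod_mul_distrib]
    exact Finset.prod_congr rfl fun ℓ _ => by rw [hC]; ring
  have hmon : (∏ ℓ ∈ Finset.Icc 1 k, (X - C ((d:ℝ) + 2 - 2*(ℓ:ℝ)))).Monic :=
    monic_prod_of_monic _ _ fun ℓ _ => monic_X_sub_C _
  have hndeg : (∏ ℓ ∈ Finset.Icc 1 k, (X - C ((d:ℝ) + 2 - 2*(ℓ:ℝ)))).natDegree = k := by
    rw [natDegree_prod _ _ fun ℓ _ => X_sub_C_ne_zero _,
      Finset.sum_congr rfl fun ℓ _ => natDegree_X_sub_C _, Finset.sum_const, hcardI,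
      smul_eq_mul, mul_one]
  have hdegf : f.degree < s.card := by
    rw [hfalt, hcard]
    calc (C ((-1:ℝ)^k) * ∏ ℓ ∈ Finset.Icc 1 k, (X - C ((d:ℝ) + 2 - 2*(ℓ:ℝ)))).degree
        ≤ _ := Polynomial.degree_mul_le _ _
      _ < (↑(k+1) : WithBot ℕ) := by
          refine lt_of_le_of_lt (add_le_add Polynomial.degree_C_le Polynomial.degree_le_natDegree) ?_
          rw [hndeg, zero_add]
          exact_mod_cast Nat.lt_succ_self k
  have hcoeff : f.coeff k = (-1:ℝ)^k := by
    have h1 := hmon.coeff_natDegree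
    rw [hndeg] at h1
    rw [hfalt, Polynomial.coeff_C_mul, h1, mul_one]
  have key := coeff_top_eq_sum s v hvs f hdegf
  rw [hcard] at key
  simp only [Nat.add_sub_cancel] at key
  rw [hcoeff] at key
  rw [hs, Finset.sum_insert h0] at key
  have hzero : f.eval (v 0) = 0 := by
    rw [hfeval]
    refine Finset.prod_eq_zero hj ?_
    simp only [hv, if_pos rfl, hc]
    ring
  rw [hzero, zero_mul, zero_add] at key
  have key2 : (-1:ℝ)^k = ∑ i ∈ Finset.Icc 1 k, (-1:ℝ)^k *
      (((∏ ℓ ∈ Finset.Icc 1 k, ((d:ℝ) + 2 - 2*(ℓ:ℝ) - 2*(i:ℝ))) /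
        ∏ ℓ ∈ (Finset.Icc 1 k).erase i, (2*(ℓ:ℝ) - 2*(i:ℝ))) / ((d:ℝ) + 2 - 2*(i:ℝ) - 2*(j:ℝ))) := by
    refine key.trans (Finset.sum_congr rfl fun i hi => ?_)
    obtain ⟨hi1, hik⟩ := Finset.mem_Icc.mp hi
    have hi0 : i ≠ 0 := by omega
    have hvi : v i = 2*(i:ℝ) := by rw [hv]; simp [hi0]
    have herase : ((insert 0 (Finset.Icc 1 k)).erase i) = insert 0 ((Finset.Icc 1 k).erase i) :=
      Finset.erase_insert_of_ne (by omega)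
    have h0e : (0:ℕ) ∉ (Finset.Icc 1 k).erase i := fun h => h0 (Finset.mem_of_mem_erase h)
    rw [herase, Finset.prod_insert h0e, hfeval, hvi]
    have hv0 : v 0 = c := by simp [hv]
    rw [hv0]
    have hprod : ∏ m ∈ (Finset.Icc 1 k).erase i, (2*(i:ℝ) - v m)⁻¹
        = ((-1:ℝ)^(k-1) * ∏ m ∈ (Finset.Icc 1 k).erase i, (2*(m:ℝ) - 2*(i:ℝ)))⁻¹ := by
      rw [Finset.prod_inv_distrib]
      congr 1
      have hcarde : ((Finset.Icc 1 k).erase i).card = k - 1 := by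
        rw [Finset.card_erase_of_mem hi, hcardI]
      rw [← hcarde, ← Finset.prod_const, ← Finset.prod_mul_distrib]
      refine Finset.prod_congr rfl fun m hm => ?_
      have hm0 : m ≠ 0 := by
        have h1 := (Finset.mem_Icc.mp (Finset.mem_of_mem_erase hm)).1
        omega
      simp only [hv]; rw [if_neg hm0]; ring
    rw [hprod]
    have hsign : (-1:ℝ)^k = (-1:ℝ)^(k-1) * (-1) := by
      conv_lhs => rw [show k = (k-1) + 1 by omega]
      rw [pow_succ]
    have hinv : ((-1:ℝ)^(k-1))⁻¹ = (-1:ℝ)^(k-1) := by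
      rw [← inv_pow]; norm_num
    have hci : 2*(i:ℝ) - c = -((d:ℝ) + 2 - 2*(i:ℝ) - 2*(j:ℝ)) := by rw [hc]; ring
    rw [hci, hsign]
    simp only [inv_neg, mul_inv, hinv, div_eq_mul_inv]
    ring
  rw [← Finset.mul_sum] at key2
  have hne : ((-1:ℝ)^k) ≠ 0 := by positivity
  have h3 : (-1:ℝ)^k * 1 = (-1:ℝ)^k * (∑ i ∈ Finset.Icc 1 k,
      ((∏ ℓ ∈ Finset.Icc 1 k, ((d:ℝ) + 2 - 2*(ℓ:ℝ) - 2*(i:ℝ))) /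
        ∏ ℓ ∈ (Finset.Icc 1 k).erase i, (2*(ℓ:ℝ) - 2*(i:ℝ))) / ((d:ℝ) + 2 - 2*(i:ℝ) - 2*(j:ℝ))) := by
    rw [mul_one]; exact key2
  exact (mul_left_cancel₀ hne h3).symm


lemma ibp_step (R : ℝ) (hR : 0 < R) (u : ℝ → ℝ) (hu : ContDiff ℝ (⊤ : ℕ∞) u) (p : ℝ)
    (hi1 : IntegrableOn (fun r : ℝ => deriv u r * r ^ p) (Set.Ioi R))
    (hi2 : IntegrableOn (fun r : ℝ => p * (u r * r ^ (p-1))) (Set.Ioi R))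
    (htend : Tendsto (fun r : ℝ => u r * r ^ p) atTop (nhds 0)) :
    ∫ r in Set.Ioi R, deriv u r * r ^ p
      = -(u R * R ^ p) - p * ∫ r in Set.Ioi R, u r * r ^ (p-1) := by
  have hderiv : ∀ x ∈ Set.Ici R, HasDerivAt (fun r => u r * r ^ p)
      (deriv u x * x ^ p + p * (u x * x ^ (p-1))) x := by
    intro x hx
    have hx0 : x ≠ 0 := (lt_of_lt_of_le hR hx).ne'
    have h1 : HasDerivAt u (deriv u x) x := (hu.differentiable (by simp) x).hasDerivAt
    have h2 : HasDerivAt (fun r : ℝ => r ^ p) (p * x ^ (p-1)) x :=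
      Real.hasDerivAt_rpow_const (Or.inl hx0)
    have h3 : HasDerivAt (fun r => u r * r ^ p) (deriv u x * x ^ p + u x * (p * x ^ (p-1))) x :=
      h1.mul h2
    convert h3 using 1
    ring
  have hint : IntegrableOn (fun x => deriv u x * x ^ p + p * (u x * x ^ (p-1))) (Set.Ioi R) :=
    hi1.add hi2
  have hIBP := integral_Ioi_of_hasDerivAt_of_tendsto' hderiv hint htend
  rw [MeasureTheory.integral_add hi1 hi2, MeasureTheory.integral_const_mul] at hIBP
  linarith

lemma tendsto_decay (R C : ℝ) (hR : 0 < R) (u : ℝ → ℝ) (a p : ℝ) (hap : a + p < 0)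
    (hdec : ∀ r : ℝ, R ≤ r → |u r| ≤ C * r ^ a) :
    Tendsto (fun r : ℝ => u r * r ^ p) atTop (nhds 0) := by
  have hbound : ∀ᶠ r : ℝ in atTop, ‖u r * r ^ p‖ ≤ C * r ^ (a + p) := by
    filter_upwards [eventually_ge_atTop R] with r hr
    have hr0 : 0 < r := lt_of_lt_of_le hR hr
    have : ‖u r * r ^ p‖ = |u r| * r ^ p := by
      rw [norm_mul, Real.norm_eq_abs, Real.norm_eq_abs, abs_of_nonneg (Real.rpow_nonneg hr0.le p)]
    rw [this, Real.rpow_add hr0, ← mul_assoc]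
    exact mul_le_mul_of_nonneg_right (hdec r hr) (Real.rpow_nonneg hr0.le p)
  have h1 : Tendsto (fun r : ℝ => r ^ (-(-(a+p)))) atTop (nhds 0) :=
    tendsto_rpow_neg_atTop (by linarith)
  simp only [neg_neg] at h1
  have h2 : Tendsto (fun r : ℝ => C * r ^ (a+p)) atTop (nhds 0) := by
    simpa using h1.const_mul C
  exact squeeze_zero_norm' hbound h2

end AuxLambda

/-- Integration-by-parts identity for the projection coefficients `λ_j(R)`:
for `d` odd, `k̃ = ⌊(d+2)/4⌋`, `R > 0`, the coefficients `D j` from the inverse Cauchy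
matrix, and `u` smooth with sufficient decay, one has
`λ_j(R) = (D j/(d-2j)) [ u(R) R^(d-2j) + ∑_{i=1}^{k̃-1} (2i D_{i+1} R^(d-2i-2j)/(d-2i-2j))
∫_R^∞ u(r) r^(2i-1) dr ]`. -/
theorem lambda_explicit (d : ℕ) (hd : Odd d) (hd0 : 0 < d) (R : ℝ) (hR : 0 < R)
    (D : ℕ → ℝ)
    (hD : ∀ j, D j =
      (∏ ℓ ∈ Finset.Icc 1 ((d + 2) / 4), ((d : ℝ) + 2 - 2 * (ℓ : ℝ) - 2 * (j : ℝ))) /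
        ∏ ℓ ∈ (Finset.Icc 1 ((d + 2) / 4)).erase j, (2 * (ℓ : ℝ) - 2 * (j : ℝ)))
    (u : ℝ → ℝ) (hu : ContDiff ℝ (⊤ : ℕ∞) u)
    (hdecay : ∃ C : ℝ, ∀ r : ℝ, R ≤ r →
      |u r| ≤ C * r ^ ((2 * ((d + 2) / 4 : ℕ) : ℝ) - d - 1) ∧
      |deriv u r| ≤ C * r ^ ((2 * ((d + 2) / 4 : ℕ) : ℝ) - d - 2))
    (hint1 : ∀ i ∈ Finset.Icc 1 ((d + 2) / 4),
      IntegrableOn (fun r : ℝ => deriv u r * r ^ (2 * (i : ℝ) - 2)) (Set.Ioi R))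
    (hint2 : ∀ i ∈ Finset.Icc 1 ((d + 2) / 4),
      IntegrableOn (fun r : ℝ => u r * r ^ (2 * (i : ℝ) - 1)) (Set.Ioi R))
    (j : ℕ) (hj : j ∈ Finset.Icc 1 ((d + 2) / 4)) :
    ∑ i ∈ Finset.Icc 1 ((d + 2) / 4),
        (-(R ^ ((d : ℝ) + 2 - 2 * (i : ℝ) - 2 * (j : ℝ))) /
            (((d : ℝ) - 2 * (j : ℝ)) * ((d : ℝ) + 2 - 2 * (i : ℝ) - 2 * (j : ℝ)))) *
          D i * D j * ∫ r in Set.Ioi R, deriv u r * r ^ (2 * (i : ℝ) - 2) =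
      D j / ((d : ℝ) - 2 * (j : ℝ)) *
        (u R * R ^ ((d : ℝ) - 2 * (j : ℝ)) +
          ∑ i ∈ Finset.Icc 1 ((d + 2) / 4 - 1),
            (2 * (i : ℝ) * D (i + 1) * R ^ ((d : ℝ) - 2 * (i : ℝ) - 2 * (j : ℝ)) /
                ((d : ℝ) - 2 * (i : ℝ) - 2 * (j : ℝ))) *
              ∫ r in Set.Ioi R, u r * r ^ (2 * (i : ℝ) - 1)) := by
  have hjk := Finset.mem_Icc.mp hj
  set k := (d + 2) / 4 with hk
  obtain ⟨C, hdec⟩ := hdecay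
  have hdj : (d:ℝ) - 2*(j:ℝ) ≠ 0 := by
    intro h; exact odd_cast_ne hd j (by push_cast; linarith)
  have hX : ∀ i : ℕ, (d:ℝ) + 2 - 2*(i:ℝ) - 2*(j:ℝ) ≠ 0 := by
    intro i h
    apply odd_cast_ne hd ((i:ℤ) + (j:ℤ) - 1); push_cast; linarith
  have h4k : 4 * k ≤ d + 1 := by obtain ⟨m, hm⟩ := hd; omega
  have hIBP : ∀ i ∈ Finset.Icc 1 k,
      (∫ r in Set.Ioi R, deriv u r * r ^ (2*(i:ℝ) - 2))
        = -(u R * R ^ (2*(i:ℝ)-2)) - (2*(i:ℝ)-2) * ∫ r in Set.Ioi R, u r * r ^ (2*(i:ℝ)-2-1) := by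
    intro i hi
    obtain ⟨hi1, hik⟩ := Finset.mem_Icc.mp hi
    apply ibp_step R hR u hu
    · exact hint1 i hi
    · rcases eq_or_lt_of_le hi1 with h1 | h2
      · have h10 : (2*(i:ℝ)-2) = 0 := by rw [← h1]; norm_num
        have hz : (fun r : ℝ => (2*(i:ℝ)-2) * (u r * r ^ (2*(i:ℝ)-2-1))) = fun _ => (0:ℝ) := by
          funext r; rw [h10]; ring
        rw [hz]
        exact integrableOn_zero
      · have hi2' : i - 1 ∈ Finset.Icc 1 k := Finset.mem_Icc.mpr ⟨by omega, by omega⟩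
        have h3 := (hint2 (i-1) hi2').const_mul (2*(i:ℝ)-2)
        have hexp : 2*(((i-1:ℕ)):ℝ) - 1 = 2*(i:ℝ)-2-1 := by
          have hc1 : ((i-1:ℕ):ℝ) = (i:ℝ) - 1 := by
            push_cast [Nat.cast_sub (by omega : 1 ≤ i)]; ring
          rw [hc1]; ring
        rwa [hexp] at h3
    · apply tendsto_decay R C hR u _ _ _ (fun r hr => (hdec r hr).1)
      have hik' : (i:ℝ) ≤ (k:ℝ) := by exact_mod_cast hik
      have h4k' : ((4*k : ℕ):ℝ) ≤ (d:ℝ) + 1 := by exact_mod_cast h4k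
      push_cast
      push_cast at h4k'
      linarith
  -- abbreviations
  set I1 : ℕ → ℝ := fun i => ∫ r in Set.Ioi R, u r * r ^ (2*(i:ℝ)-2-1) with hI1
  have step1 : ∑ i ∈ Finset.Icc 1 k,
        (-(R ^ ((d : ℝ) + 2 - 2 * (i : ℝ) - 2 * (j : ℝ))) /
            (((d : ℝ) - 2 * (j : ℝ)) * ((d : ℝ) + 2 - 2 * (i : ℝ) - 2 * (j : ℝ)))) *
          D i * D j * ∫ r in Set.Ioi R, deriv u r * r ^ (2 * (i : ℝ) - 2)
      = ∑ i ∈ Finset.Icc 1 k,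
        (u R * (R ^ ((d:ℝ)+2-2*(i:ℝ)-2*(j:ℝ)) * R ^ (2*(i:ℝ)-2)) * (D j/((d:ℝ)-2*(j:ℝ)))
            * (D i / ((d:ℝ)+2-2*(i:ℝ)-2*(j:ℝ)))
          + D j/((d:ℝ)-2*(j:ℝ)) *
            ((2*(i:ℝ)-2) * D i * R ^ ((d:ℝ)+2-2*(i:ℝ)-2*(j:ℝ))/((d:ℝ)+2-2*(i:ℝ)-2*(j:ℝ)))
            * I1 i) := by
    refine Finset.sum_congr rfl fun i hi => ?_
    rw [hIBP i hi]
    simp only [hI1]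
    have hXi := hX i
    field_simp
    ring
  rw [step1, Finset.sum_add_distrib]
  -- sum of A-terms
  have hRpow : ∀ i : ℕ, R ^ ((d:ℝ)+2-2*(i:ℝ)-2*(j:ℝ)) * R ^ (2*(i:ℝ)-2) = R ^ ((d:ℝ)-2*(j:ℝ)) := by
    intro i
    rw [← Real.rpow_add hR]
    congr 1
    ring
  have hsumD : ∑ i ∈ Finset.Icc 1 k, D i / ((d:ℝ)+2-2*(i:ℝ)-2*(j:ℝ)) = 1 := by
    simp only [hD]
    exact cauchy_sum hd hj
  have stepA : ∑ i ∈ Finset.Icc 1 k,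
      u R * (R ^ ((d:ℝ)+2-2*(i:ℝ)-2*(j:ℝ)) * R ^ (2*(i:ℝ)-2)) * (D j/((d:ℝ)-2*(j:ℝ)))
        * (D i / ((d:ℝ)+2-2*(i:ℝ)-2*(j:ℝ)))
      = D j / ((d:ℝ)-2*(j:ℝ)) * (u R * R ^ ((d:ℝ)-2*(j:ℝ))) := by
    calc ∑ i ∈ Finset.Icc 1 k,
        u R * (R ^ ((d:ℝ)+2-2*(i:ℝ)-2*(j:ℝ)) * R ^ (2*(i:ℝ)-2)) * (D j/((d:ℝ)-2*(j:ℝ)))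
          * (D i / ((d:ℝ)+2-2*(i:ℝ)-2*(j:ℝ)))
        = ∑ i ∈ Finset.Icc 1 k,
          (u R * R ^ ((d:ℝ)-2*(j:ℝ)) * (D j/((d:ℝ)-2*(j:ℝ))))
            * (D i / ((d:ℝ)+2-2*(i:ℝ)-2*(j:ℝ))) := by
          refine Finset.sum_congr rfl fun i hi => ?_
          rw [hRpow i]
      _ = (u R * R ^ ((d:ℝ)-2*(j:ℝ)) * (D j/((d:ℝ)-2*(j:ℝ)))) * ∑ i ∈ Finset.Icc 1 k,
            D i / ((d:ℝ)+2-2*(i:ℝ)-2*(j:ℝ)) := by rw [Finset.mul_sum]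
      _ = D j / ((d:ℝ)-2*(j:ℝ)) * (u R * R ^ ((d:ℝ)-2*(j:ℝ))) := by rw [hsumD]; ring
  rw [stepA]
  -- sum of B-terms
  have hk1 : 1 ≤ k := le_trans hjk.1 hjk.2
  have h1nm : (1:ℕ) ∉ Finset.Icc 2 k := by simp
  have hsplit : Finset.Icc 1 k = insert 1 (Finset.Icc 2 k) := by
    ext x
    simp only [Finset.mem_Icc, Finset.mem_insert]
    omega
  have hmap : Finset.map (addRightEmbedding 1) (Finset.Icc 1 (k-1)) = Finset.Icc 2 k := by
    rw [Finset.map_add_right_Icc]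
    congr 1
    omega
  have stepB : ∑ i ∈ Finset.Icc 1 k,
      D j/((d:ℝ)-2*(j:ℝ)) *
        ((2*(i:ℝ)-2) * D i * R ^ ((d:ℝ)+2-2*(i:ℝ)-2*(j:ℝ))/((d:ℝ)+2-2*(i:ℝ)-2*(j:ℝ))) * I1 i
      = D j / ((d:ℝ)-2*(j:ℝ)) * ∑ i ∈ Finset.Icc 1 (k - 1),
          (2 * (i : ℝ) * D (i + 1) * R ^ ((d : ℝ) - 2 * (i : ℝ) - 2 * (j : ℝ)) /
              ((d : ℝ) - 2 * (i : ℝ) - 2 * (j : ℝ))) *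
            ∫ r in Set.Ioi R, u r * r ^ (2 * (i : ℝ) - 1) := by
    rw [hsplit, Finset.sum_insert h1nm]
    have hB1 : D j/((d:ℝ)-2*(j:ℝ)) *
        ((2*((1:ℕ):ℝ)-2) * D 1 * R ^ ((d:ℝ)+2-2*((1:ℕ):ℝ)-2*(j:ℝ))/((d:ℝ)+2-2*((1:ℕ):ℝ)-2*(j:ℝ))) * I1 1 = 0 := by
      norm_num
    rw [hB1, zero_add, ← hmap, Finset.sum_map, Finset.mul_sum]
    refine Finset.sum_congr rfl fun i hi => ?_
    have he1 : (addRightEmbedding 1) i = i + 1 := rfl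
    rw [he1]
    have hcast : ((i+1:ℕ):ℝ) = (i:ℝ) + 1 := by push_cast; ring
    have hexp2 : 2*(((i+1:ℕ)):ℝ)-2-1 = 2*(i:ℝ)-1 := by rw [hcast]; ring
    have hexp3 : (d:ℝ)+2-2*((i:ℝ)+1)-2*(j:ℝ) = (d:ℝ)-2*(i:ℝ)-2*(j:ℝ) := by ring
    have hI : I1 (i+1) = ∫ r in Set.Ioi R, u r * r ^ (2 * (i : ℝ) - 1) := by
      rw [hI1]
      simp only
      rw [hexp2]
    rw [hI, hcast, hexp3]
    ring
  rw [stepB, mul_add]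
end

section
/- If ψ : [1,∞) → R is locally absolutely continuous with ψ(1) = 0 and has finite ℓ-equivariant energy E(ψ) = ∫_1^∞ (ψ'(r)² + ℓ(ℓ+1) sin²(ψ(r))/r²) r² dr < ∞, then the limit lim_{r→∞} ψ(r) exists and equals nπ for some integer n. -/
/-!
On `(1, ∞)` the energy controls `∫ g² r² dr` and `∫ sin² ψ dr`. Since `r⁻¹ ∈ L²(1, ∞)`,
Cauchy–Schwarz makes `g = ψ'` integrable there, so `ψ` has a limit `L` at infinity. Then
`sin² ψ` is integrable on a set of infinite measure and tends to `sin² L`, forcing `sin L = 0`.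
-/

open MeasureTheory Set Filter Topology

section

variable {E : Type*} [NormedAddCommGroup E]

theorem aestronglyMeasurable_restrict_Ioi_of_intervalIntegrable {μ : Measure ℝ} {f : ℝ → E}
    {a : ℝ} (hf : ∀ b, a ≤ b → IntervalIntegrable f μ a b) :
    AEStronglyMeasurable f (μ.restrict (Ioi a)) := by
  have hb : Tendsto (fun b => max a b) atTop atTop :=
    tendsto_atTop_mono (le_max_right a) tendsto_id
  refine (aecover_Iic hb).aestronglyMeasurable fun b => ?_
  rw [Measure.restrict_restrict measurableSet_Iic, inter_comm, Ioi_inter_Iic]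
  exact ((intervalIntegrable_iff_integrableOn_Ioc_of_le (le_max_left a b)).mp
    (hf _ (le_max_left a b))).aestronglyMeasurable

theorem eq_zero_of_integrableOn_Ioi_of_tendsto {f : ℝ → E} {a : ℝ} {c : E}
    (hf : IntegrableOn f (Ioi a)) (hc : Tendsto f atTop (𝓝 c)) : c = 0 := by
  refine IntegrableAtFilter.eq_zero_of_tendsto ⟨Ioi a, Ioi_mem_atTop a, hf⟩ (fun s hs => ?_) hc
  obtain ⟨b, hb⟩ := mem_atTop_sets.mp hs
  rw [← top_le_iff, ← Real.volume_Ici (a := b)]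
  exact measure_mono hb

variable [NormedSpace ℝ E]

theorem tendsto_add_integral_Ioi_of_sub_eq_integral {ψ f : ℝ → E} {a : ℝ}
    (hψ : ∀ b, a ≤ b → ψ b - ψ a = ∫ t in a..b, f t) (hf : IntegrableOn f (Ioi a)) :
    Tendsto ψ atTop (𝓝 (ψ a + ∫ t in Ioi a, f t)) := by
  refine ((intervalIntegral_tendsto_integral_Ioi a hf tendsto_id).const_add (ψ a)).congr' ?_
  filter_upwards [eventually_ge_atTop a] with b hb
  rw [id, ← hψ b hb, add_sub_cancel]

end

theorem integrableOn_Ioi_inv_sq {a : ℝ} (ha : 0 < a) :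
    IntegrableOn (fun r : ℝ => (r ^ 2)⁻¹) (Ioi a) := by
  refine (integrableOn_Ioi_rpow_of_lt (by norm_num : (-2 : ℝ) < -1) ha).congr_fun
    (fun r hr => ?_) measurableSet_Ioi
  simp only [Real.rpow_neg (ha.trans hr).le, Real.rpow_two]

-- Cauchy–Schwarz: `g r = (g r * r) * r⁻¹` with both factors in `L²(a, ∞)`.
theorem integrableOn_Ioi_of_integrableOn_sq_mul_sq {g : ℝ → ℝ} {a : ℝ} (ha : 0 < a)
    (hg : AEStronglyMeasurable g (volume.restrict (Ioi a)))
    (h : IntegrableOn (fun r => g r ^ 2 * r ^ 2) (Ioi a)) : IntegrableOn g (Ioi a) := by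
  have hgr : MemLp (fun r => g r * r) 2 (volume.restrict (Ioi a)) := by
    refine (memLp_two_iff_integrable_sq (hg.mul measurable_id.aestronglyMeasurable)).mpr ?_
    simpa only [Pi.mul_apply, id, mul_pow] using h.integrable
  have hinv : MemLp (fun r : ℝ => r⁻¹) 2 (volume.restrict (Ioi a)) := by
    refine (memLp_two_iff_integrable_sq measurable_inv.aestronglyMeasurable).mpr ?_
    simpa only [inv_pow] using (integrableOn_Ioi_inv_sq ha).integrable
  refine IntegrableOn.congr_fun (hgr.integrable_mul hinv) (fun r hr => ?_) measurableSet_Ioi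
  have : r ≠ 0 := (ha.trans hr).ne'
  simp [this]

theorem integrable_and_integrable_of_integrable_add {α : Type*} [MeasurableSpace α]
    {μ : Measure α} {f h : α → ℝ} (hfh : Integrable (f + h) μ) (hf : AEStronglyMeasurable f μ)
    (hf0 : 0 ≤ᵐ[μ] f) (hh0 : 0 ≤ᵐ[μ] h) : Integrable f μ ∧ Integrable h μ := by
  have hfi : Integrable f μ := by
    refine hfh.mono' hf ?_
    filter_upwards [hf0, hh0] with x hfx hhx
    rw [Real.norm_eq_abs, abs_of_nonneg hfx, Pi.add_apply]
    exact le_add_of_nonneg_right hhx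
  exact ⟨hfi, by simpa using hfh.sub hfi⟩

theorem finite_energy_limit_general (ℓ : ℕ) (hℓ : 1 ≤ ℓ) (ψ g : ℝ → ℝ)
    (hAC : ∀ a b : ℝ, 1 ≤ a → a ≤ b →
      IntervalIntegrable g volume a b ∧ ψ b - ψ a = ∫ t in a..b, g t)
    (hE : IntegrableOn
      (fun r : ℝ => (g r ^ 2 + (ℓ : ℝ) * ((ℓ : ℝ) + 1) * Real.sin (ψ r) ^ 2 / r ^ 2) * r ^ 2)
      (Set.Ioi 1)) :
    ∃ n : ℤ, Filter.Tendsto ψ Filter.atTop (nhds ((n : ℝ) * Real.pi)) := by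
  set c : ℝ := ℓ * (ℓ + 1)
  have hc : 0 < c := mul_pos (by exact_mod_cast hℓ) (by positivity)
  have hgm : AEStronglyMeasurable g (volume.restrict (Ioi 1)) :=
    aestronglyMeasurable_restrict_Ioi_of_intervalIntegrable fun b hb => (hAC 1 b le_rfl hb).1
  have hsplit : IntegrableOn ((fun r => g r ^ 2 * r ^ 2) + fun r => c * Real.sin (ψ r) ^ 2)
      (Ioi 1) := by
    refine hE.congr_fun (fun r (hr : 1 < r) => ?_) measurableSet_Ioi
    simp only [Pi.add_apply]
    field_simp [(one_pos.trans hr).ne']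
  obtain ⟨hkin, hpot⟩ := integrable_and_integrable_of_integrable_add hsplit
    ((hgm.pow 2).mul (measurable_id.pow_const 2).aestronglyMeasurable)
    (.of_forall fun r => by positivity) (.of_forall fun r => by positivity)
  have hψ := tendsto_add_integral_Ioi_of_sub_eq_integral (fun b hb => (hAC 1 b le_rfl hb).2)
    (integrableOn_Ioi_of_integrableOn_sq_mul_sq one_pos hgm hkin)
  set L := ψ 1 + ∫ t in Ioi 1, g t
  have hsinL : Real.sin L = 0 := by
    have := eq_zero_of_integrableOn_Ioi_of_tendsto hpot
      (((Real.continuous_sin.tendsto L).comp hψ).pow 2 |>.const_mul c)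
    simpa [hc.ne'] using this
  obtain ⟨n, hn⟩ := Real.sin_eq_zero_iff.mp hsinL
  exact ⟨n, hn ▸ hψ⟩

/-- A finite-energy ℓ-equivariant map angle converges to an integer multiple of π: if
`ψ : [1,∞) → ℝ` is locally absolutely continuous (with derivative `g` in the sense of the
fundamental theorem of calculus), `ψ 1 = 0`, and the energy
`∫_1^∞ (g² + ℓ(ℓ+1) sin²(ψ)/r²) r² dr` is finite, then `ψ(r) → nπ` as `r → ∞` for some
integer `n`. -/
theorem finite_energy_limit (ℓ : ℕ) (hℓ : 1 ≤ ℓ) (ψ g : ℝ → ℝ)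
    (hAC : ∀ a b : ℝ, 1 ≤ a → a ≤ b →
      IntervalIntegrable g volume a b ∧ ψ b - ψ a = ∫ t in a..b, g t)
    (hbc : ψ 1 = 0)
    (hE : IntegrableOn
      (fun r : ℝ => (g r ^ 2 + (ℓ : ℝ) * ((ℓ : ℝ) + 1) * Real.sin (ψ r) ^ 2 / r ^ 2) * r ^ 2)
      (Set.Ioi 1)) :
    ∃ n : ℤ, Filter.Tendsto ψ Filter.atTop (nhds ((n : ℝ) * Real.pi)) :=
  finite_energy_limit_general ℓ hℓ ψ g hAC hE
end
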